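/- arXiv:2401.04048 — 5 statements merged into one kernel-verified Lean document; each statement's English description precedes it below -/
import Mathlib

section
/- Let n ≥ 1 be an integer and q ∈ {−1, 1}. Define J(x) = 1 + (q/(2π))·sin²(nx/2), μ_{n,q}(x) = 2n²/J(x) − 3n²·(1 + q/(2π))/J(x)², ψ₁(x) = J(x)^{−1/2}·( (q·x/(2π))·sin(nx/2) − (2/n)·cos(nx/2) ), and ψ₂(x) = J(x)^{−1/2}·sin(nx/2). Then: (i) J(x) > 0 for all x and μ_{n,q} is smooth and 2π-periodic; (ii) ψ₁ and ψ₂ solve ψ'' = (μ_{n,q}/4)·ψ; (iii) ψ₁'(x)ψ₂(x) − ψ₂'(x)ψ₁(x) = 1 for all x; (iv) ψ₁(x + 2π) = (−1)ⁿ·( ψ₁(x) + q·ψ₂(x) ) and ψ₂(x + 2π) = (−1)ⁿ·ψ₂(x) for all x, so the monodromy matrix of (ψ₁, ψ₂) is (−1)ⁿ·[[1, q],[0, 1]]; (v) (1/(2π)) ∫₀^{2π} μ_{n,q}(x) dx = −n²·(3q + 4π)/(2·√(2πq + 4π²)). -/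
open Real

open Real

lemma hdR {f : ℝ → ℝ} {f' x : ℝ} (h : HasDerivAt f f' x) : HasDerivAt f f' x := h

lemma hd_sin (m x : ℝ) : HasDerivAt (fun y => Real.sin (m*y/2)) (m/2 * Real.cos (m*x/2)) x := by
  have h1 : HasDerivAt (fun y : ℝ => m*y/2) (m/2) x := by
    simpa using ((hasDerivAt_id x).const_mul m).div_const 2
  simpa [mul_comm, Function.comp_def] using hdR ((Real.hasDerivAt_sin (m*x/2)).comp x h1)

lemma hd_cos (m x : ℝ) : HasDerivAt (fun y => Real.cos (m*y/2)) (-(m/2) * Real.sin (m*x/2)) x := by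
  have h1 : HasDerivAt (fun y : ℝ => m*y/2) (m/2) x := by
    simpa using ((hasDerivAt_id x).const_mul m).div_const 2
  simpa [mul_comm, Function.comp_def] using hdR ((Real.hasDerivAt_cos (m*x/2)).comp x h1)

lemma hd_J (a m x : ℝ) : HasDerivAt (fun y => 1 + a * Real.sin (m*y/2)^2)
    (a * m * Real.sin (m*x/2) * Real.cos (m*x/2)) x := by
  have h2 := hdR ((hasDerivAt_const x (1:ℝ)).add (((hd_sin m x).pow 2).const_mul a))
  exact h2.congr_deriv (by ring)

lemma hd_r (a m x : ℝ) (h : 0 < 1 + a * Real.sin (m*x/2)^2) :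
    HasDerivAt (fun y => Real.sqrt (1 + a * Real.sin (m*y/2)^2))
      (a * m * Real.sin (m*x/2) * Real.cos (m*x/2) / (2 * Real.sqrt (1 + a * Real.sin (m*x/2)^2))) x :=
  (hd_J a m x).sqrt (ne_of_gt h)

lemma hd_psi2 (a m x : ℝ) (h : 0 < 1 + a * Real.sin (m*x/2)^2) :
    HasDerivAt (fun y => (1 / Real.sqrt (1 + a * Real.sin (m*y/2)^2)) * Real.sin (m*y/2))
      (m * Real.cos (m*x/2) / (2 * (Real.sqrt (1 + a * Real.sin (m*x/2)^2))^3)) x := by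
  have hrpos : 0 < Real.sqrt (1 + a * Real.sin (m*x/2)^2) := Real.sqrt_pos.mpr h
  have hinv : HasDerivAt (fun y => 1 / Real.sqrt (1 + a * Real.sin (m*y/2)^2))
      (-(a * m * Real.sin (m*x/2) * Real.cos (m*x/2) / (2 * Real.sqrt (1 + a * Real.sin (m*x/2)^2)))
        / (Real.sqrt (1 + a * Real.sin (m*x/2)^2))^2) x := by
    simp only [one_div]; exact hdR ((hd_r a m x h).inv hrpos.ne')
  have hmul := hdR (hinv.mul (hd_sin m x))
  refine hmul.congr_deriv (Eq.symm ?_)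
  set s := Real.sin (m*x/2) with hs
  set c := Real.cos (m*x/2) with hc
  set r := Real.sqrt (1 + a*s^2) with hr
  have h2 : r^2 = 1+a*s^2 := Real.sq_sqrt h.le
  have hsc : s^2+c^2 = 1 := Real.sin_sq_add_cos_sq _
  field_simp
  linear_combination (-m*c) * h2

lemma hd_ddpsi2 (a m x : ℝ) (h : 0 < 1 + a * Real.sin (m*x/2)^2) :
    HasDerivAt (fun y => m * Real.cos (m*y/2) / (2 * (Real.sqrt (1 + a * Real.sin (m*y/2)^2))^3))
      ((2*m^2/(1 + a * Real.sin (m*x/2)^2) - 3*m^2*(1+a)/(1 + a * Real.sin (m*x/2)^2)^2)/4 *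
        ((1 / Real.sqrt (1 + a * Real.sin (m*x/2)^2)) * Real.sin (m*x/2))) x := by
  have hrpos : 0 < Real.sqrt (1 + a * Real.sin (m*x/2)^2) := Real.sqrt_pos.mpr h
  have hN : HasDerivAt (fun y => m * Real.cos (m*y/2)) (m * (-(m/2) * Real.sin (m*x/2))) x :=
    (hd_cos m x).const_mul m
  have hD : HasDerivAt (fun y => 2 * (Real.sqrt (1 + a * Real.sin (m*y/2)^2))^3)
      (2 * (3 * (Real.sqrt (1 + a * Real.sin (m*x/2)^2))^2 *
        (a * m * Real.sin (m*x/2) * Real.cos (m*x/2) / (2 * Real.sqrt (1 + a * Real.sin (m*x/2)^2))))) x := by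
    have := hdR (((hd_r a m x h).pow 3).const_mul 2)
    exact this.congr_deriv (by ring)
  have hdiv := hdR (hN.div hD (by positivity))
  refine hdiv.congr_deriv (Eq.symm ?_)
  set s := Real.sin (m*x/2) with hs
  set c := Real.cos (m*x/2) with hc
  set r := Real.sqrt (1 + a*s^2) with hr
  have h2 : r^2 = 1+a*s^2 := Real.sq_sqrt h.le
  have hsc : s^2+c^2 = 1 := Real.sin_sq_add_cos_sq _
  rw [← h2]
  field_simp
  linear_combination (12*m^2*s) * h2 + (12*m^2*s*a) * hsc

lemma hd_psi1 (a m x : ℝ) (hm : m ≠ 0) (h : 0 < 1 + a * Real.sin (m*x/2)^2) :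
    HasDerivAt (fun y => (1 / Real.sqrt (1 + a * Real.sin (m*y/2)^2)) *
        ((a*y) * Real.sin (m*y/2) - (2/m) * Real.cos (m*y/2)))
      (((1+2*a) * Real.sin (m*x/2) + a^2 * Real.sin (m*x/2)^3 + a*m*x/2 * Real.cos (m*x/2)) /
        (Real.sqrt (1 + a * Real.sin (m*x/2)^2))^3) x := by
  have hrpos : 0 < Real.sqrt (1 + a * Real.sin (m*x/2)^2) := Real.sqrt_pos.mpr h
  have hinv : HasDerivAt (fun y => 1 / Real.sqrt (1 + a * Real.sin (m*y/2)^2))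
      (-(a * m * Real.sin (m*x/2) * Real.cos (m*x/2) / (2 * Real.sqrt (1 + a * Real.sin (m*x/2)^2)))
        / (Real.sqrt (1 + a * Real.sin (m*x/2)^2))^2) x := by
    simp only [one_div]; exact hdR ((hd_r a m x h).inv hrpos.ne')
  have hg : HasDerivAt (fun y => (a*y) * Real.sin (m*y/2) - (2/m) * Real.cos (m*y/2))
      (a * Real.sin (m*x/2) + (a*x) * (m/2 * Real.cos (m*x/2)) - (2/m) * (-(m/2) * Real.sin (m*x/2))) x := by
    exact (hdR ((((hasDerivAt_id x).const_mul a).mul (hd_sin m x)).sub ((hd_cos m x).const_mul (2/m)))).congr_deriv (by simp only [id_eq]; ring)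
  have hmul := hdR (hinv.mul hg)
  refine hmul.congr_deriv (Eq.symm ?_)
  set s := Real.sin (m*x/2) with hs
  set c := Real.cos (m*x/2) with hc
  set r := Real.sqrt (1 + a*s^2) with hr
  have h2 : r^2 = 1+a*s^2 := Real.sq_sqrt h.le
  have hsc : s^2+c^2 = 1 := Real.sin_sq_add_cos_sq _
  field_simp
  linear_combination (-2*a*s) * hsc - (2*a*s + a*m*x*c + 2*s) * h2

lemma hd_ddpsi1 (a m x : ℝ) (hm : m ≠ 0) (h : 0 < 1 + a * Real.sin (m*x/2)^2) :
    HasDerivAt (fun y => ((1+2*a) * Real.sin (m*y/2) + a^2 * Real.sin (m*y/2)^3 + a*m*y/2 * Real.cos (m*y/2)) /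
        (Real.sqrt (1 + a * Real.sin (m*y/2)^2))^3)
      ((2*m^2/(1 + a * Real.sin (m*x/2)^2) - 3*m^2*(1+a)/(1 + a * Real.sin (m*x/2)^2)^2)/4 *
        ((1 / Real.sqrt (1 + a * Real.sin (m*x/2)^2)) *
          ((a*x) * Real.sin (m*x/2) - (2/m) * Real.cos (m*x/2)))) x := by
  have hrpos : 0 < Real.sqrt (1 + a * Real.sin (m*x/2)^2) := Real.sqrt_pos.mpr h
  have hN : HasDerivAt (fun y => (1+2*a) * Real.sin (m*y/2) + a^2 * Real.sin (m*y/2)^3 + a*m*y/2 * Real.cos (m*y/2))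
      ((1+2*a) * (m/2 * Real.cos (m*x/2)) + a^2 * (3 * Real.sin (m*x/2)^2 * (m/2 * Real.cos (m*x/2)))
        + (a*m/2 * Real.cos (m*x/2) + a*m*x/2 * (-(m/2) * Real.sin (m*x/2)))) x := by
    have h1 := ((hd_sin m x).const_mul (1+2*a)).add (((hd_sin m x).pow 3).const_mul (a^2))
    have h2 : HasDerivAt (fun y : ℝ => a*m*y/2 * Real.cos (m*y/2))
        (a*m/2 * Real.cos (m*x/2) + a*m*x/2 * (-(m/2) * Real.sin (m*x/2))) x := by
      have := hdR ((((hasDerivAt_id x).const_mul (a*m)).div_const 2).mul (hd_cos m x))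
      refine this.congr_deriv (Eq.symm ?_)
      simp only [id_eq]
      ring
    exact (hdR (h1.add h2)).congr_deriv (by ring)
  have hD : HasDerivAt (fun y => (Real.sqrt (1 + a * Real.sin (m*y/2)^2))^3)
      (3 * (Real.sqrt (1 + a * Real.sin (m*x/2)^2))^2 *
        (a * m * Real.sin (m*x/2) * Real.cos (m*x/2) / (2 * Real.sqrt (1 + a * Real.sin (m*x/2)^2)))) x :=
    (hd_r a m x h).pow 3
  have hdiv := hdR (hN.div hD (by positivity))
  refine hdiv.congr_deriv (Eq.symm ?_)
  set s := Real.sin (m*x/2) with hs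
  set c := Real.cos (m*x/2) with hc
  set r := Real.sqrt (1 + a*s^2) with hr
  have h2 : r^2 = 1+a*s^2 := Real.sq_sqrt h.le
  have hsc : s^2+c^2 = 1 := Real.sin_sq_add_cos_sq _
  rw [← h2]
  field_simp
  linear_combination (4*(3*a*m*x*s - 6*c - 6*a*c - 6*a^2*s^2*c)) * h2 + (12*a^2*m*x*s) * hsc

lemma arctan_alg (s c k a : ℝ) (hk : 0 < k) (hk2 : k^2 = 1+a) (hsc : s^2+c^2=1)
    (hDm : 0 < c^2+k*s^2) (hJp : 0 < 1+a*s^2) (h1W : 0 < 1+((k-1)*s*c/(c^2+k*s^2))^2) :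
    1/k * (1 + 1/(1+((k-1)*s*c/(c^2+k*s^2))^2) *
      (((k-1)*(c*c+s*(-s))*(c^2+k*s^2) - (k-1)*s*c*(2*c*(-s)+k*(2*s*c)))/(c^2+k*s^2)^2)) = 1/(1+a*s^2) := by
  have e1 : 1+((k-1)*s*c/(c^2+k*s^2))^2 = ((c^2+k*s^2)^2 + ((k-1)*s*c)^2)/(c^2+k*s^2)^2 := by
    field_simp
  rw [e1]
  have h2 : 0 < (c^2+k*s^2)^2 + ((k-1)*s*c)^2 := by positivity
  rw [one_div_div, div_mul_div_comm]
  field_simp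
  rw [eq_div_iff (by linarith [hJp] : (0:ℝ) < 1 + s^2*a).ne', show c^2 = 1 - s^2 by linarith, show a = k^2 - 1 by linarith]
  ring

lemma hd_H (a t : ℝ) (ha : 0 < 1 + a) :
    HasDerivAt (fun u => (1/Real.sqrt (1+a)) * (u + Real.arctan ((Real.sqrt (1+a) - 1) *
        Real.sin u * Real.cos u / (Real.cos u^2 + Real.sqrt (1+a) * Real.sin u^2))))
      (1/(1 + a * Real.sin t^2)) t := by
  have hk : 0 < Real.sqrt (1+a) := Real.sqrt_pos.mpr ha
  have hk2 : Real.sqrt (1+a)^2 = 1+a := Real.sq_sqrt ha.le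
  have hsc : Real.sin t^2 + Real.cos t^2 = 1 := Real.sin_sq_add_cos_sq t
  have hDm : 0 < Real.cos t^2 + Real.sqrt (1+a) * Real.sin t^2 := by
    nlinarith [sq_nonneg (Real.sin t), sq_nonneg (Real.cos t)]
  have hJp : 0 < 1 + a * Real.sin t^2 := by
    rcases le_or_gt a 0 with h'|h'
    · nlinarith [mul_le_mul_of_nonpos_left (Real.sin_sq_le_one t) h']
    · nlinarith [mul_nonneg h'.le (sq_nonneg (Real.sin t))]
  have hN : HasDerivAt (fun u => (Real.sqrt (1+a) - 1) * Real.sin u * Real.cos u)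
      ((Real.sqrt (1+a) - 1) * (Real.cos t * Real.cos t + Real.sin t * (-Real.sin t))) t := by
    have := hdR (((Real.hasDerivAt_sin t).mul (Real.hasDerivAt_cos t)).const_mul (Real.sqrt (1+a) - 1))
    convert this using 2; simp only [Pi.mul_apply]; ring
  have hDd : HasDerivAt (fun u => Real.cos u^2 + Real.sqrt (1+a) * Real.sin u^2)
      (2 * Real.cos t * (-Real.sin t) + Real.sqrt (1+a) * (2 * Real.sin t * Real.cos t)) t := by
    have h1 := ((Real.hasDerivAt_cos t).pow 2).add (((Real.hasDerivAt_sin t).pow 2).const_mul (Real.sqrt (1+a)))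
    exact (hdR h1).congr_deriv (by ring)
  have hW := hN.div hDd hDm.ne'
  have harc := (Real.hasDerivAt_arctan ((Real.sqrt (1+a) - 1) *
      Real.sin t * Real.cos t / (Real.cos t^2 + Real.sqrt (1+a) * Real.sin t^2))).comp t hW
  have hfull := hdR (((hasDerivAt_id t).add harc).const_mul (1/Real.sqrt (1+a)))
  refine hfull.congr_deriv (Eq.symm ?_)
  set s := Real.sin t with hs
  set c := Real.cos t with hc
  set k := Real.sqrt (1+a) with hkk
  have h1W : 0 < 1 + ((k-1)*s*c/(c^2+k*s^2))^2 := by positivity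
  exact (arctan_alg s c k a hk hk2 hsc hDm hJp h1W).symm

lemma hd_B (a t : ℝ) (h : 0 < 1 + a * Real.sin t^2) :
    HasDerivAt (fun u => Real.sin u * Real.cos u / (1 + a * Real.sin u^2))
      ((1 - (2+a) * Real.sin t^2) / (1 + a * Real.sin t^2)^2) t := by
  have hN : HasDerivAt (fun u => Real.sin u * Real.cos u)
      (Real.cos t * Real.cos t + Real.sin t * (-Real.sin t)) t :=
    (Real.hasDerivAt_sin t).mul (Real.hasDerivAt_cos t)
  have hD : HasDerivAt (fun u => 1 + a * Real.sin u^2)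
      (a * (2 * Real.sin t * Real.cos t)) t := by
    exact (hdR ((hasDerivAt_const t (1:ℝ)).add (((Real.hasDerivAt_sin t).pow 2).const_mul a))).congr_deriv (by ring)
  have hdiv := hdR (hN.div hD h.ne')
  refine hdiv.congr_deriv (Eq.symm ?_)
  set s := Real.sin t with hs
  set c := Real.cos t with hc
  have hsc : s^2+c^2 = 1 := Real.sin_sq_add_cos_sq t
  field_simp
  ring_nf
  linear_combination (a*s^2 - 1) * hsc

lemma hd_Phi (a m x : ℝ) (ha : 0 < 1 + a) (h : 0 < 1 + a * Real.sin (m*x/2)^2) :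
    HasDerivAt (fun y => -(m*(2+3*a)) * ((1/Real.sqrt (1+a)) * (m*y/2 + Real.arctan ((Real.sqrt (1+a) - 1) *
        Real.sin (m*y/2) * Real.cos (m*y/2) / (Real.cos (m*y/2)^2 + Real.sqrt (1+a) * Real.sin (m*y/2)^2))))
        - 3*m*a * (Real.sin (m*y/2) * Real.cos (m*y/2) / (1 + a * Real.sin (m*y/2)^2)))
      (2*m^2/(1 + a * Real.sin (m*x/2)^2) - 3*m^2*(1+a)/(1 + a * Real.sin (m*x/2)^2)^2) x := by
  have hlin : HasDerivAt (fun y : ℝ => m*y/2) (m/2) x := by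
    simpa using ((hasDerivAt_id x).const_mul m).div_const 2
  have hH := ((hd_H a (m*x/2) ha).comp x hlin).const_mul (-(m*(2+3*a)))
  have hB := ((hd_B a (m*x/2) h).comp x hlin).const_mul (3*m*a)
  have hfull' := hdR (hH.sub hB)
  have hfull : HasDerivAt (fun y => -(m*(2+3*a)) * ((1/Real.sqrt (1+a)) * (m*y/2 + Real.arctan ((Real.sqrt (1+a) - 1) *
        Real.sin (m*y/2) * Real.cos (m*y/2) / (Real.cos (m*y/2)^2 + Real.sqrt (1+a) * Real.sin (m*y/2)^2))))
        - 3*m*a * (Real.sin (m*y/2) * Real.cos (m*y/2) / (1 + a * Real.sin (m*y/2)^2)))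
      (-(m*(2+3*a)) * (1/(1 + a * Real.sin (m*x/2)^2) * (m/2))
        - 3*m*a * ((1 - (2+a) * Real.sin (m*x/2)^2) / (1 + a * Real.sin (m*x/2)^2)^2 * (m/2))) x := by
    exact hfull'
  refine hfull.congr_deriv (Eq.symm ?_)
  set s := Real.sin (m*x/2) with hs
  set c := Real.cos (m*x/2) with hc
  have hsc : s^2+c^2 = 1 := Real.sin_sq_add_cos_sq _
  field_simp
  ring_nf


lemma Jpos (a u : ℝ) (ha : 0 < 1 + a) : 0 < 1 + a * Real.sin u ^ 2 := by
  rcases le_or_gt a 0 with h'|h'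
  · nlinarith [mul_le_mul_of_nonpos_left (Real.sin_sq_le_one u) h']
  · nlinarith [mul_nonneg h'.le (sq_nonneg (Real.sin u))]

open Real Matrix

/-- Properties of the canonical parabolic-type (`𝓟ₙ^q`) mass-aspect functions
`μ_{n,q}` and their Wronskian-normalized Hill functions `(ψ₁, ψ₂)`:
positivity of `J`, smoothness and periodicity of `μ_{n,q}`, the Hill
equations, the Wronskian normalization, the monodromy relations giving
`M = (−1)ⁿ [[1, q],[0, 1]]`, and the value of the Hamiltonian mass
`(1/(2π)) ∫₀^{2π} μ_{n,q} = −n²(3q + 4π)/(2√(2πq + 4π²))`. -/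
theorem parabolic_type_canonical (n : ℕ) (hn : 1 ≤ n) (q : ℝ)
    (hq : q = -1 ∨ q = 1) (J μnq ψ₁ ψ₂ : ℝ → ℝ)
    (hJ : ∀ x, J x = 1 + (q / (2 * π)) * Real.sin ((n : ℝ) * x / 2) ^ 2)
    (hμ : ∀ x, μnq x = 2 * (n : ℝ) ^ 2 / J x -
        3 * (n : ℝ) ^ 2 * (1 + q / (2 * π)) / J x ^ 2)
    (hψ₁ : ∀ x, ψ₁ x = (1 / Real.sqrt (J x)) *
        ((q * x / (2 * π)) * Real.sin ((n : ℝ) * x / 2) -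
          (2 / n) * Real.cos ((n : ℝ) * x / 2)))
    (hψ₂ : ∀ x, ψ₂ x = (1 / Real.sqrt (J x)) * Real.sin ((n : ℝ) * x / 2)) :
    (∀ x, 0 < J x) ∧ ContDiff ℝ (⊤ : ℕ∞) μnq ∧ Function.Periodic μnq (2 * π) ∧
      (∀ x, deriv (deriv ψ₁) x = μnq x / 4 * ψ₁ x) ∧
      (∀ x, deriv (deriv ψ₂) x = μnq x / 4 * ψ₂ x) ∧
      (∀ x, deriv ψ₁ x * ψ₂ x - deriv ψ₂ x * ψ₁ x = 1) ∧
      (∀ x, ψ₁ (x + 2 * π) = (-1 : ℝ) ^ n * (ψ₁ x + q * ψ₂ x)) ∧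
      (∀ x, ψ₂ (x + 2 * π) = (-1 : ℝ) ^ n * ψ₂ x) ∧
      (1 / (2 * π)) * (∫ x in (0:ℝ)..(2 * π), μnq x) =
        -(n : ℝ) ^ 2 * (3 * q + 4 * π) / (2 * Real.sqrt (2 * π * q + 4 * π ^ 2)) := by
  have hπ := Real.pi_pos
  have hπ3 := Real.pi_gt_three
  have hm0 : (n : ℝ) ≠ 0 := Nat.cast_ne_zero.mpr (by omega)
  set a : ℝ := q / (2 * π) with hadef
  have hq2π : q = 2 * π * a := by rw [hadef]; field_simp
  have ha : 0 < 1 + a := by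
    have h1 : (1:ℝ)/(2*π) < 1 := by
      rw [div_lt_one (by positivity)]; nlinarith
    rcases hq with h | h <;> rw [hadef, h]
    · rw [neg_div]; linarith
    · positivity
  have hpos : ∀ x : ℝ, 0 < 1 + a * Real.sin ((n:ℝ) * x / 2) ^ 2 := fun x => Jpos a _ ha
  -- normalize the four functions
  have hψ₁f : ψ₁ = fun x => (1 / Real.sqrt (1 + a * Real.sin ((n:ℝ)*x/2)^2)) *
      ((a*x) * Real.sin ((n:ℝ)*x/2) - (2/(n:ℝ)) * Real.cos ((n:ℝ)*x/2)) := by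
    funext x; rw [hψ₁ x, hJ x]; ring
  have hψ₂f : ψ₂ = fun x => (1 / Real.sqrt (1 + a * Real.sin ((n:ℝ)*x/2)^2)) *
      Real.sin ((n:ℝ)*x/2) := by
    funext x; rw [hψ₂ x, hJ x]
  have hμf : μnq = fun x => 2*(n:ℝ)^2/(1 + a * Real.sin ((n:ℝ)*x/2)^2) -
      3*(n:ℝ)^2*(1+a)/(1 + a * Real.sin ((n:ℝ)*x/2)^2)^2 := by
    funext x; rw [hμ x, hJ x]
  clear hψ₁ hψ₂ hμ
  subst hψ₁f hψ₂f hμf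
  -- trig shift facts
  have hneg1 : ((-1:ℝ)^n)^2 = 1 := by
    rw [← pow_mul, mul_comm, pow_mul, neg_one_sq, one_pow]
  have harg : ∀ x : ℝ, (n:ℝ)*(x + 2*π)/2 = (n:ℝ)*x/2 + (n:ℕ)*π := by
    intro x; push_cast; ring
  have hsin2 : ∀ x : ℝ, Real.sin ((n:ℝ)*(x + 2*π)/2)^2 = Real.sin ((n:ℝ)*x/2)^2 := by
    intro x
    rw [harg x, Real.sin_add_nat_mul_pi, mul_pow, hneg1, one_mul]
  -- first derivatives
  have hD1 : deriv (fun x => (1 / Real.sqrt (1 + a * Real.sin ((n:ℝ)*x/2)^2)) *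
      ((a*x) * Real.sin ((n:ℝ)*x/2) - (2/(n:ℝ)) * Real.cos ((n:ℝ)*x/2)))
      = fun x => ((1+2*a) * Real.sin ((n:ℝ)*x/2) + a^2 * Real.sin ((n:ℝ)*x/2)^3 +
          a*(n:ℝ)*x/2 * Real.cos ((n:ℝ)*x/2)) / (Real.sqrt (1 + a * Real.sin ((n:ℝ)*x/2)^2))^3 :=
    funext fun x => (hd_psi1 a (n:ℝ) x hm0 (hpos x)).deriv
  have hD2 : deriv (fun x => (1 / Real.sqrt (1 + a * Real.sin ((n:ℝ)*x/2)^2)) *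
      Real.sin ((n:ℝ)*x/2))
      = fun x => (n:ℝ) * Real.cos ((n:ℝ)*x/2) / (2 * (Real.sqrt (1 + a * Real.sin ((n:ℝ)*x/2)^2))^3) :=
    funext fun x => (hd_psi2 a (n:ℝ) x (hpos x)).deriv
  -- smoothness
  have hlincd : ContDiff ℝ (⊤ : ℕ∞) (fun x : ℝ => (n:ℝ)*x/2) :=
    (contDiff_const.mul contDiff_id).div_const 2
  have hsincd : ContDiff ℝ (⊤ : ℕ∞) (fun x : ℝ => Real.sin ((n:ℝ)*x/2)) :=
    Real.contDiff_sin.comp hlincd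
  have hJcd : ContDiff ℝ (⊤ : ℕ∞) (fun x : ℝ => 1 + a * Real.sin ((n:ℝ)*x/2)^2) :=
    contDiff_const.add (contDiff_const.mul (hsincd.pow 2))
  have hμcd : ContDiff ℝ (⊤ : ℕ∞) (fun x => 2*(n:ℝ)^2/(1 + a * Real.sin ((n:ℝ)*x/2)^2) -
      3*(n:ℝ)^2*(1+a)/(1 + a * Real.sin ((n:ℝ)*x/2)^2)^2) := by
    exact (contDiff_const.div hJcd fun x => (hpos x).ne').sub
      (contDiff_const.div (hJcd.pow 2) fun x => (pow_ne_zero 2 (hpos x).ne'))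
  refine ⟨?_, hμcd, ?_, ?_, ?_, ?_, ?_, ?_, ?_⟩
  · intro x; rw [hJ x]; exact Jpos a _ ha
  · intro x
    simp only [hsin2 x]
  · intro x
    rw [hD1]
    exact (hd_ddpsi1 a (n:ℝ) x hm0 (hpos x)).deriv
  · intro x
    rw [hD2]
    exact (hd_ddpsi2 a (n:ℝ) x (hpos x)).deriv
  · intro x
    rw [hD1, hD2]
    simp only []
    set s := Real.sin ((n:ℝ)*x/2) with hs
    set c := Real.cos ((n:ℝ)*x/2) with hc
    set r := Real.sqrt (1 + a*s^2) with hr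
    have hrpos : 0 < r := Real.sqrt_pos.mpr (hpos x)
    have h2 : r^2 = 1+a*s^2 := Real.sq_sqrt (hpos x).le
    have hsc : s^2+c^2 = 1 := Real.sin_sq_add_cos_sq _
    field_simp
    linear_combination 2 * hsc - 2*(r^2 + 1 + a*s^2) * h2
  · intro x
    simp only []
    rw [hsin2 x, harg x, Real.sin_add_nat_mul_pi, Real.cos_add_nat_mul_pi, hq2π]
    ring
  · intro x
    simp only []
    rw [hsin2 x, harg x, Real.sin_add_nat_mul_pi]
    ring
  · -- the integral
    have hcont : Continuous (fun x => 2*(n:ℝ)^2/(1 + a * Real.sin ((n:ℝ)*x/2)^2) -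
        3*(n:ℝ)^2*(1+a)/(1 + a * Real.sin ((n:ℝ)*x/2)^2)^2) := hμcd.continuous
    have hint := intervalIntegral.integral_eq_sub_of_hasDerivAt
      (f := fun y => -((n:ℝ)*(2+3*a)) * ((1/Real.sqrt (1+a)) * ((n:ℝ)*y/2 +
        Real.arctan ((Real.sqrt (1+a) - 1) * Real.sin ((n:ℝ)*y/2) * Real.cos ((n:ℝ)*y/2) /
          (Real.cos ((n:ℝ)*y/2)^2 + Real.sqrt (1+a) * Real.sin ((n:ℝ)*y/2)^2))))
        - 3*(n:ℝ)*a * (Real.sin ((n:ℝ)*y/2) * Real.cos ((n:ℝ)*y/2) / (1 + a * Real.sin ((n:ℝ)*y/2)^2)))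
      (f' := fun x => 2*(n:ℝ)^2/(1 + a * Real.sin ((n:ℝ)*x/2)^2) -
        3*(n:ℝ)^2*(1+a)/(1 + a * Real.sin ((n:ℝ)*x/2)^2)^2)
      (a := (0:ℝ)) (b := 2*π)
      (fun x _ => hd_Phi a (n:ℝ) x ha (hpos x))
      (hcont.intervalIntegrable 0 (2*π))
    rw [hint]
    have hk : 0 < Real.sqrt (1+a) := Real.sqrt_pos.mpr ha
    have hk2 : Real.sqrt (1+a)^2 = 1+a := Real.sq_sqrt ha.le
    have hv0 : ((n:ℝ)*(0:ℝ)/2) = 0 := by ring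
    have hv2 : ((n:ℝ)*(2*π)/2) = 0 + (n:ℕ)*π := by push_cast; ring
    simp only [hv0, hv2, Real.sin_add_nat_mul_pi, Real.sin_zero, Real.cos_zero, Real.sin_nat_mul_pi]
    have hsqrt : Real.sqrt (2*π*q + 4*π^2) = 2*π*Real.sqrt (1+a) := by
      rw [hq2π, show 2*π*(2*π*a) + 4*π^2 = (2*π)^2*(1+a) by ring,
        Real.sqrt_mul (by positivity) (1+a), Real.sqrt_sq (by positivity)]
    rw [hsqrt, hq2π]
    simp only [mul_zero, zero_mul, zero_div, Real.arctan_zero, add_zero, zero_add, sub_zero,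
      ne_eq, zero_pow, OfNat.ofNat_ne_zero, not_false_eq_true]
    field_simp
    ring
end

section
/- Let r₀ ≥ 0 and let f : (r₀, ∞) × ℝ → (0, ∞) be a smooth function, 2π-periodic in its second argument φ. Then for every r > r₀, d/dr ∫₀^{2π} ( f(r, φ) − r² ) dφ = − ∫₀^{2π} ( R_f(r, φ) + 2 + (∂_φ f(r, φ))² / (2 r² f(r, φ)²) ) · r dφ, where R_f := −(1/r)·∂_r f + (1/(r² f))·∂²_φ f − (3/(2 r² f²))·(∂_φ f)². -/
open Real MeasureTheory

/-- Radial partial derivative `∂_r f`. -/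
noncomputable def pderivR (f : ℝ → ℝ → ℝ) (r φ : ℝ) : ℝ :=
  deriv (fun s => f s φ) r

/-- Angular partial derivative `∂_φ f`. -/
noncomputable def pderivPhi (f : ℝ → ℝ → ℝ) (r φ : ℝ) : ℝ :=
  deriv (fun t => f r t) φ

/-- Second angular partial derivative `∂²_φ f`. -/
noncomputable def pderivPhi2 (f : ℝ → ℝ → ℝ) (r φ : ℝ) : ℝ :=
  deriv (deriv (fun t => f r t)) φ

/-- The scalar curvature `R_f` of the metric `g = f⁻¹ dr² + r² dφ²`:
`R_f = −(1/r) ∂_r f + (1/(r² f)) ∂²_φ f − (3/(2 r² f²)) (∂_φ f)²`. -/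
noncomputable def scalarCurv (f : ℝ → ℝ → ℝ) (r φ : ℝ) : ℝ :=
  -(1 / r) * pderivR f r φ + (1 / (r ^ 2 * f r φ)) * pderivPhi2 f r φ -
    (3 / (2 * r ^ 2 * (f r φ) ^ 2)) * (pderivPhi f r φ) ^ 2

/-- Derivative of the renormalized-area integrand: for a smooth positive
`f(r, φ)`, `2π`-periodic in `φ`, and every `r > r₀`,
`d/dr ∫₀^{2π} (f − r²) dφ
  = −∫₀^{2π} (R_f + 2 + (∂_φ f)²/(2 r² f²)) · r dφ`. -/
theorem deriv_mass_integral (r₀ : ℝ) (hr₀ : 0 ≤ r₀) (f : ℝ → ℝ → ℝ)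
    (hf : ContDiffOn ℝ (⊤ : ℕ∞) (fun p : ℝ × ℝ => f p.1 p.2)
      (Set.Ioi r₀ ×ˢ (Set.univ : Set ℝ)))
    (hpos : ∀ r ∈ Set.Ioi r₀, ∀ φ : ℝ, 0 < f r φ)
    (hper : ∀ r ∈ Set.Ioi r₀, ∀ φ : ℝ, f r (φ + 2 * π) = f r φ) :
    ∀ r ∈ Set.Ioi r₀,
      HasDerivAt (fun s => ∫ φ in (0:ℝ)..(2 * π), (f s φ - s ^ 2))
        (-∫ φ in (0:ℝ)..(2 * π),
          (scalarCurv f r φ + 2 +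
            (pderivPhi f r φ) ^ 2 / (2 * r ^ 2 * (f r φ) ^ 2)) * r) r := by
  intro r hr
  have hrr : r₀ < r := hr
  have hrpos : 0 < r := lt_of_le_of_lt hr₀ hrr
  set F : ℝ × ℝ → ℝ := fun p => f p.1 p.2 with hFdef
  set S : Set (ℝ × ℝ) := Set.Ioi r₀ ×ˢ (Set.univ : Set ℝ) with hSdef
  have hSopen : IsOpen S := isOpen_Ioi.prod isOpen_univ
  have hmem : ∀ {x t : ℝ}, x ∈ Set.Ioi r₀ → (x, t) ∈ S := fun hx => ⟨hx, trivial⟩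
  -- differentiability of F on S
  have hFd : ∀ p ∈ S, HasFDerivAt F (fderiv ℝ F p) p := fun p hp =>
    ((hf.contDiffAt (hSopen.mem_nhds hp)).differentiableAt (by simp)).hasFDerivAt
  -- radial partial derivative as fderiv evaluation
  have hDR : ∀ x ∈ Set.Ioi r₀, ∀ t : ℝ,
      HasDerivAt (fun s => f s t) (fderiv ℝ F (x, t) (1, 0)) x := by
    intro x hx t
    have h1 : HasDerivAt (fun s : ℝ => (s, t)) ((1 : ℝ), (0 : ℝ)) x :=
      (hasDerivAt_id x).prodMk (hasDerivAt_const x t)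
    exact (hFd (x, t) (hmem hx)).comp_hasDerivAt x h1
  have hDReq : ∀ x ∈ Set.Ioi r₀, ∀ t : ℝ, pderivR f x t = fderiv ℝ F (x, t) (1, 0) :=
    fun x hx t => (hDR x hx t).deriv
  -- continuity of the radial derivative
  have hfderivC : ContinuousOn (fun p => fderiv ℝ F p) S :=
    hf.continuousOn_fderiv_of_isOpen hSopen (by simp)
  have hDC : ContinuousOn (fun p => fderiv ℝ F p (1, 0)) S :=
    hfderivC.clm_apply continuousOn_const
  -- smoothness of slices
  have hslice : ∀ x ∈ Set.Ioi r₀, ContDiff ℝ (⊤ : ℕ∞) (fun t => f x t) := by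
    intro x hx
    rw [← contDiffOn_univ]
    exact hf.comp ((contDiff_const.prodMk contDiff_id).contDiffOn) fun t _ => hmem hx
  -- set-up for dominated differentiation
  set ε : ℝ := (r - r₀) / 2 with hεdef
  have hε : 0 < ε := by simp only [hεdef]; linarith
  have hball : Metric.closedBall r ε ⊆ Set.Ioi r₀ := by
    intro x hx
    rw [Metric.mem_closedBall, Real.dist_eq] at hx
    have := abs_le.mp hx
    simp only [Set.mem_Ioi]
    simp only [hεdef] at this
    linarith [this.1]
  have hK : IsCompact (Metric.closedBall r ε ×ˢ Set.uIcc (0:ℝ) (2*π)) :=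
    (isCompact_closedBall r ε).prod isCompact_uIcc
  have hKS : Metric.closedBall r ε ×ˢ Set.uIcc (0:ℝ) (2*π) ⊆ S := fun p hp =>
    ⟨hball hp.1, trivial⟩
  obtain ⟨M, hM⟩ := hK.exists_bound_of_continuousOn (hDC.mono hKS)
  -- continuity of t ↦ fderiv at (r,t)
  have hDCr : Continuous fun t : ℝ => fderiv ℝ F (r, t) (1, 0) := by
    rw [continuous_iff_continuousAt]
    intro t
    exact ((hDC (r, t) (hmem hr)).continuousAt (hSopen.mem_nhds (hmem hr))).comp
      ((continuous_const.prodMk continuous_id).continuousAt)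
  -- differentiation under the integral sign
  have key := intervalIntegral.hasDerivAt_integral_of_dominated_loc_of_deriv_le
    (F := fun x t => f x t - x ^ 2)
    (F' := fun x t => fderiv ℝ F (x, t) (1, 0) - 2 * x)
    (bound := fun _ => M + 2 * (|r| + ε)) (a := 0) (b := 2 * π) (x₀ := r)
    (s := Metric.ball r ε) (μ := MeasureTheory.volume) (Metric.ball_mem_nhds r hε)
    (by
      filter_upwards [isOpen_Ioi.mem_nhds hrr] with x hx
      exact ((hslice x hx).continuous.sub continuous_const).aestronglyMeasurable)
    (((hslice r hr).continuous.sub continuous_const).intervalIntegrable 0 (2*π))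
    ((hDCr.sub continuous_const).aestronglyMeasurable)
    (by
      refine Filter.Eventually.of_forall fun t ht => ?_
      intro x hx
      have hxK : (x, t) ∈ Metric.closedBall r ε ×ˢ Set.uIcc (0:ℝ) (2*π) :=
        ⟨Metric.ball_subset_closedBall hx, Set.uIoc_subset_uIcc ht⟩
      have h1 : ‖fderiv ℝ F (x, t) (1, 0)‖ ≤ M := hM _ hxK
      have h2 : |x - r| < ε := by rw [← Real.dist_eq]; exact Metric.mem_ball.mp hx
      have h3 : |x| ≤ |r| + ε := by
        have h4 := abs_sub_abs_le_abs_sub x r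
        linarith
      calc ‖fderiv ℝ F (x, t) (1, 0) - 2 * x‖
          ≤ ‖fderiv ℝ F (x, t) (1, 0)‖ + ‖2 * x‖ := norm_sub_le _ _
        _ ≤ M + 2 * (|r| + ε) := by
            have h5 : ‖(2:ℝ) * x‖ = 2 * |x| := by
              rw [Real.norm_eq_abs, abs_mul]; norm_num
            rw [h5]; linarith)
    (intervalIntegrable_const)
    (by
      refine Filter.Eventually.of_forall fun t ht => ?_
      intro x hx
      have hx' : x ∈ Set.Ioi r₀ := hball (Metric.ball_subset_closedBall hx)
      have h2 : HasDerivAt (fun y : ℝ => y ^ 2) (2 * x) x := by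
        simpa using hasDerivAt_pow 2 x
      exact (hDR x hx' t).sub h2)
  -- key.2 : HasDerivAt (fun x => ∫ ... (f x t - x^2)) (∫ (fderiv ... - 2r)) r
  -- Now identify the derivative value with the claimed one.
  -- slice derivatives in φ
  have hu : ContDiff ℝ ((⊤ : ℕ∞) : WithTop ℕ∞) (fun t => f r t) := (hslice r hr).of_le (by simp)
  have huP : ContDiff ℝ ((⊤ : ℕ∞) : WithTop ℕ∞) (deriv fun t => f r t) := (contDiff_infty_iff_deriv.mp hu).2
  have huQ : ContDiff ℝ ((⊤ : ℕ∞) : WithTop ℕ∞) (deriv (deriv fun t => f r t)) := (contDiff_infty_iff_deriv.mp huP).2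
  have hPd : ∀ φ : ℝ, HasDerivAt (fun t => f r t) (deriv (fun t => f r t) φ) φ :=
    fun φ => (hu.differentiable (by simp) φ).hasDerivAt
  have hQd : ∀ φ : ℝ, HasDerivAt (deriv fun t => f r t)
      (deriv (deriv fun t => f r t) φ) φ :=
    fun φ => (huP.differentiable (by simp) φ).hasDerivAt
  have hfne : ∀ φ : ℝ, f r φ ≠ 0 := fun φ => (hpos r hr φ).ne'
  have hgd : ∀ φ : ℝ, HasDerivAt (fun t => deriv (fun t' => f r t') t / f r t)
      ((deriv (deriv fun t => f r t) φ * f r φ -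
        deriv (fun t => f r t) φ * deriv (fun t => f r t) φ) / (f r φ) ^ 2) φ :=
    fun φ => (hQd φ).div (hPd φ) (hfne φ)
  have hcont_h : Continuous (fun φ => (deriv (deriv fun t => f r t) φ * f r φ -
      deriv (fun t => f r t) φ * deriv (fun t => f r t) φ) / (f r φ) ^ 2) := by
    apply Continuous.div
    · exact (huQ.continuous.mul hu.continuous).sub (huP.continuous.mul huP.continuous)
    · exact hu.continuous.pow 2
    · exact fun φ => pow_ne_zero 2 (hfne φ)
  -- integral of the total φ-derivative vanishes by periodicity
  have hzero : (∫ φ in (0:ℝ)..(2*π), (deriv (deriv fun t => f r t) φ * f r φ -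
      deriv (fun t => f r t) φ * deriv (fun t => f r t) φ) / (f r φ) ^ 2) = 0 := by
    rw [intervalIntegral.integral_eq_sub_of_hasDerivAt (fun φ _ => hgd φ)
      (hcont_h.intervalIntegrable _ _)]
    have h1 : deriv (fun t => f r t) (2*π) = deriv (fun t => f r t) 0 := by
      have he : (fun t => f r (t + 2*π)) = fun t => f r t := funext fun t => hper r hr t
      have h3 := deriv_comp_add_const (fun t => f r t) (2*π) 0
      rw [he] at h3
      simpa using h3.symm
    have h2 : f r (2*π) = f r 0 := by simpa using hper r hr 0
    rw [h1, h2, sub_self]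
  -- pointwise algebraic identity
  have hpt : ∀ φ : ℝ,
      -((scalarCurv f r φ + 2 + (pderivPhi f r φ) ^ 2 / (2 * r ^ 2 * (f r φ) ^ 2)) * r)
      = (pderivR f r φ - 2 * r) - (1 / r) *
        ((deriv (deriv fun t => f r t) φ * f r φ -
          deriv (fun t => f r t) φ * deriv (fun t => f r t) φ) / (f r φ) ^ 2) := by
    intro φ
    have h1 : f r φ ≠ 0 := hfne φ
    have h2 : r ≠ 0 := hrpos.ne'
    unfold scalarCurv pderivPhi pderivPhi2
    field_simp
    ring
  -- continuity of the radial derivative slice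
  have hA_cont : Continuous fun t : ℝ => pderivR f r t - 2 * r := by
    have : (fun t : ℝ => pderivR f r t - 2 * r)
        = fun t => fderiv ℝ F (r, t) (1, 0) - 2 * r := by
      funext t; rw [hDReq r hr t]
    rw [this]
    exact hDCr.sub continuous_const
  -- identify the derivative values
  have hval : (-∫ φ in (0:ℝ)..(2 * π),
      (scalarCurv f r φ + 2 + (pderivPhi f r φ) ^ 2 / (2 * r ^ 2 * (f r φ) ^ 2)) * r)
      = ∫ t in (0:ℝ)..(2*π), (fderiv ℝ F (r, t) (1, 0) - 2 * r) := by
    rw [← intervalIntegral.integral_neg]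
    have hcongr : (fun φ =>
        -((scalarCurv f r φ + 2 + (pderivPhi f r φ) ^ 2 / (2 * r ^ 2 * (f r φ) ^ 2)) * r))
        = fun φ => (pderivR f r φ - 2 * r) - (1 / r) *
          ((deriv (deriv fun t => f r t) φ * f r φ -
            deriv (fun t => f r t) φ * deriv (fun t => f r t) φ) / (f r φ) ^ 2) :=
      funext hpt
    rw [hcongr, intervalIntegral.integral_sub (hA_cont.intervalIntegrable _ _)
      ((show Continuous fun φ => 1 / r *
          ((deriv (deriv fun t => f r t) φ * f r φ -
            deriv (fun t => f r t) φ * deriv (fun t => f r t) φ) / (f r φ) ^ 2)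
          from continuous_const.mul hcont_h).intervalIntegrable _ _),
      intervalIntegral.integral_const_mul, hzero, mul_zero, sub_zero]
    congr 1
    funext t
    rw [hDReq r hr t]
  rw [hval]
  exact key.2
end

section
/- (Penrose-type inequality.) Let r₀ > 0 and let f : [r₀, ∞) × ℝ → [0, ∞) be smooth, 2π-periodic in its second argument φ, with f(r₀, φ) = 0 for all φ and f(r, φ) > 0 for all r > r₀. Assume R_f(r, φ) ≥ −2 for all r > r₀ and all φ, and that there is a continuous 2π-periodic function μ : ℝ → ℝ with sup_φ | f(r, φ) − r² + μ(φ) | → 0 as r → ∞. Then the Hamiltonian mass H := (1/(2π)) ∫₀^{2π} μ(φ) dφ satisfies H ≥ r₀² = (ℓ/(2π))², where ℓ = 2π r₀ is the length of the curve {r = r₀}. Moreover, if H = r₀², then f(r, φ) = r² − r₀² for all r ≥ r₀ and all φ. -/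
open Real MeasureTheory
open Set

/-- A continuous nonnegative function on `[a,b]` with nonpositive integral vanishes. -/
private lemma pen_zero {g : ℝ → ℝ} {a b : ℝ} (hab : a < b)
    (hc : ContinuousOn g (Icc a b)) (hnn : ∀ x ∈ Icc a b, 0 ≤ g x)
    (hint : (∫ x in a..b, g x) ≤ 0) : ∀ x ∈ Icc a b, g x = 0 := by
  by_contra hcon
  push_neg at hcon
  obtain ⟨x0, hx0, hgx0⟩ := hcon
  have hgpos : 0 < g x0 := lt_of_le_of_ne (hnn x0 hx0) (Ne.symm hgx0)
  -- find a small interval around x0 where g > g x0 / 2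
  have hcw : ContinuousWithinAt g (Icc a b) x0 := hc x0 hx0
  have hev : ∀ᶠ y in nhdsWithin x0 (Icc a b), g x0 / 2 < g y :=
    hcw.eventually_const_lt (by linarith)
  have hev' : {y | g x0 / 2 < g y} ∈ nhdsWithin x0 (Icc a b) := hev
  rw [Metric.mem_nhdsWithin_iff] at hev'
  obtain ⟨δ, hδ, hball⟩ := hev'
  set c := max a (x0 - δ/2) with hc'
  set d := min b (x0 + δ/2) with hd'
  have hac : a ≤ c := le_max_left _ _
  have hdb : d ≤ b := min_le_left _ _
  have hcd : c < d := by
    rcases hx0 with ⟨h1, h2⟩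
    simp only [hc', hd', lt_min_iff, max_lt_iff]
    constructor
    · constructor <;> [linarith; linarith]
    · constructor <;> [linarith; linarith]
  have hsub : Icc c d ⊆ Icc a b := Icc_subset_Icc hac hdb
  have hint1 : IntervalIntegrable g volume a c :=
    (hc.mono (Icc_subset_Icc le_rfl (by rcases hx0 with ⟨h1,h2⟩; simp [hc']; constructor <;> linarith))).intervalIntegrable_of_Icc hac
  have hint2 : IntervalIntegrable g volume c d :=
    (hc.mono hsub).intervalIntegrable_of_Icc hcd.le
  have hint3 : IntervalIntegrable g volume d b :=
    (hc.mono (Icc_subset_Icc (hac.trans hcd.le) le_rfl)).intervalIntegrable_of_Icc hdb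
  have h1 : 0 ≤ ∫ x in a..c, g x := by
    apply intervalIntegral.integral_nonneg hac
    intro u hu
    exact hnn u ⟨hu.1, hu.2.trans (hcd.le.trans hdb)⟩
  have h3 : 0 ≤ ∫ x in d..b, g x := by
    apply intervalIntegral.integral_nonneg hdb
    intro u hu
    exact hnn u ⟨(hac.trans (hcd.le.trans hu.1)), hu.2⟩
  have h2 : (d - c) * (g x0 / 2) ≤ ∫ x in c..d, g x := by
    have := intervalIntegral.integral_mono_on hcd.le
      (intervalIntegrable_const (c := g x0 / 2)) hint2 ?_
    · simpa [mul_div_assoc] using this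
    · intro u hu
      have huab : u ∈ Icc a b := hsub hu
      have hdist : dist u x0 < δ := by
        rw [Real.dist_eq, abs_lt]
        rcases hu with ⟨huc, hud⟩
        have h5 : x0 - δ/2 ≤ u := le_trans (le_max_right _ _) huc
        have h6 : u ≤ x0 + δ/2 := le_trans hud (min_le_right _ _)
        constructor <;> linarith
      exact (hball ⟨Metric.mem_ball.2 hdist, huab⟩).le
  have htot : (∫ x in a..b, g x) = (∫ x in a..c, g x) + (∫ x in c..d, g x) + (∫ x in d..b, g x) := by
    rw [intervalIntegral.integral_add_adjacent_intervals hint1 hint2,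
      intervalIntegral.integral_add_adjacent_intervals (hint1.trans hint2) hint3]
  have hpos2 : 0 < (d - c) * (g x0 / 2) := by
    apply mul_pos (by linarith) (by linarith)
  linarith [hint, htot, h1, h2, h3, hpos2]

/-- Fubini for continuous functions on a rectangle, interval-integral form. -/
private lemma pen_fubini {F : ℝ → ℝ → ℝ} {a b c d : ℝ} (hab : a ≤ b) (hcd : c ≤ d)
    (hF : ContinuousOn (fun p : ℝ × ℝ => F p.1 p.2) (Icc a b ×ˢ Icc c d)) :
    ∫ y in c..d, (∫ x in a..b, F x y) = ∫ x in a..b, (∫ y in c..d, F x y) := by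
  have hInt : IntegrableOn (fun p : ℝ × ℝ => F p.1 p.2) (Icc a b ×ˢ Icc c d) volume :=
    hF.integrableOn_compact (isCompact_Icc.prod isCompact_Icc)
  have hInt2 : Integrable (Function.uncurry F)
      ((volume.restrict (Ioc a b)).prod (volume.restrict (Ioc c d))) := by
    rw [Measure.prod_restrict]
    have : (volume : Measure (ℝ × ℝ)) = (volume : Measure ℝ).prod volume :=
      Measure.volume_eq_prod ℝ ℝ
    rw [← this]
    exact hInt.mono_set (Set.prod_mono Ioc_subset_Icc_self Ioc_subset_Icc_self)
  have hswap := MeasureTheory.integral_integral_swap hInt2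
  simp only [intervalIntegral.integral_of_le hab, intervalIntegral.integral_of_le hcd]
  exact hswap.symm

private lemma pen_sq_le {P T : ℝ} (hP : 0 ≤ P) (hT : 0 ≤ T) (h : P^2 ≤ T^2) : P ≤ T := by
  nlinarith

private lemma pen_curv {s fv A B C : ℝ} (hs : 0 < s) (hf : 0 < fv)
    (h : -2 ≤ -(1/s)*A + (1/(s^2*fv))*B - (3/(2*s^2*fv^2))*C^2) :
    (fv*A)/s - fv^2/(2*s^2) ≤ 2*fv + B/s^2 - fv^2/(2*s^2) := by
  have h3 : 0 ≤ 3*C^2/(2*s^2*fv) := by positivity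
  have hmul := mul_le_mul_of_nonneg_left h hf.le
  have hexp : fv * (-(1/s)*A + (1/(s^2*fv))*B - (3/(2*s^2*fv^2))*C^2)
      = -(fv*A/s) + B/s^2 - 3*C^2/(2*s^2*fv) := by
    field_simp
  rw [hexp] at hmul
  linarith

private lemma pen_arith {I Px s δ' x' : ℝ} (hx : 0 < x') (hs : 0 ≤ s) (hδ : 0 < δ')
    (hI : 0 < I) (hP : Px ≤ s*I) : 4*x'*Px < 2*I*(δ' + s*(2*x')) := by
  nlinarith [mul_pos hδ hI, mul_le_mul_of_nonneg_left hP (by linarith : (0:ℝ) ≤ 4*x')]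

/-- Grönwall-type comparison: from the integral inequality for `Q` and
Cauchy-Schwarz `P² ≤ 2πQ`, deduce `√Q(b) ≤ √Q(a) + √(2π)(b²-a²)`. -/
private lemma pen_comp {r₀ : ℝ} (hr₀ : 0 < r₀) {P Q : ℝ → ℝ}
    (hQc : ContinuousOn Q (Ici r₀))
    (hQnn : ∀ s, r₀ ≤ s → 0 ≤ Q s)
    (hPnn : ∀ s, r₀ < s → 0 ≤ P s)
    (hPsq : ∀ s, r₀ < s → P s^2 ≤ 2*π*Q s)
    (key : ∀ a b, r₀ < a → a ≤ b →
      Q b/(2*b) - Q a/(2*a) ≤ ∫ s in a..b, (2*P s - Q s/(2*s^2)))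
    (hhc : ContinuousOn (fun s => 2*P s - Q s/(2*s^2)) (Ioi r₀))
    {a b : ℝ} (ha : r₀ < a) (hab : a ≤ b) :
    Real.sqrt (Q b) ≤ Real.sqrt (Q a) + Real.sqrt (2*π)*(b^2-a^2) := by
  have h2π : (0:ℝ) < 2*π := by positivity
  -- the liminf-slope bound on Q
  have hslope : ∀ x, a ≤ x → ∀ r : ℝ, 4*x*P x < r →
      ∃ᶠ z in nhdsWithin x (Ioi x), slope Q x z < r := by
    intro x hax r hr
    have hx : r₀ < x := lt_of_lt_of_le ha hax
    have hx0 : (0:ℝ) < x := hr₀.trans hx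
    set h : ℝ → ℝ := fun s => 2*P s - Q s/(2*s^2) with hh
    have hhca : ContinuousAt h x := hhc.continuousAt (isOpen_Ioi.mem_nhds hx)
    have hmeas : StronglyMeasurableAtFilter h (nhds x) volume :=
      ContinuousOn.stronglyMeasurableAtFilter isOpen_Ioi hhc x hx
    have hΦ : HasDerivAt (fun u => ∫ s in x..u, h s) (h x) x :=
      intervalIntegral.integral_hasDerivAt_right
        (by simp [intervalIntegrable_iff]) hmeas hhca
    set Φ : ℝ → ℝ := fun u => ∫ s in x..u, h s with hΦdef
    have htend : Filter.Tendsto (slope Φ x) (nhdsWithin x (Ioi x)) (nhds (h x)) :=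
      (hasDerivAt_iff_tendsto_slope.1 hΦ).mono_left
        (nhdsWithin_mono x (fun z hz => ne_of_gt hz))
    have htz : Filter.Tendsto (fun z : ℝ => 2*z) (nhdsWithin x (Ioi x)) (nhds (2*x)) :=
      ((continuous_const.mul continuous_id).tendsto x).mono_left nhdsWithin_le_nhds
    have hχ : Filter.Tendsto (fun z => Q x/x + 2*z*(slope Φ x z))
        (nhdsWithin x (Ioi x)) (nhds (Q x/x + 2*x*(h x))) :=
      Filter.Tendsto.add tendsto_const_nhds (htz.mul htend)
    have hval : Q x/x + 2*x*(h x) = 4*x*P x := by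
      simp only [hh]
      field_simp
      ring
    rw [hval] at hχ
    have hev : ∀ᶠ z in nhdsWithin x (Ioi x), Q x/x + 2*z*(slope Φ x z) < r :=
      hχ.eventually_lt_const hr
    have hevle : ∀ᶠ z in nhdsWithin x (Ioi x),
        slope Q x z ≤ Q x/x + 2*z*(slope Φ x z) := by
      filter_upwards [self_mem_nhdsWithin] with z hz
      have hxz : x < z := hz
      have hz0 : (0:ℝ) < z := hx0.trans hxz
      have hzx : (0:ℝ) < z - x := by linarith
      have hk := key x z hx hxz.le
      have hΦx : Φ x = 0 := by simp [hΦdef]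
      have hQx : Q z ≤ z*(Q x)/x + 2*z*(Φ z) := by
        have h1 : Q z/(2*z) ≤ Q x/(2*x) + Φ z := by
          have : (∫ s in x..z, (2*P s - Q s/(2*s^2))) = Φ z := rfl
          linarith [hk]
        calc Q z = 2*z*(Q z/(2*z)) := by field_simp
        _ ≤ 2*z*(Q x/(2*x) + Φ z) := by
            apply mul_le_mul_of_nonneg_left h1 (by linarith)
        _ = z*(Q x)/x + 2*z*(Φ z) := by field_simp
      rw [slope_def_field, slope_def_field, hΦx, sub_zero]
      rw [div_le_iff₀ hzx]
      have e1 : (Q x/x + 2*z*(Φ z/(z-x)))*(z-x) = Q x*(z-x)/x + 2*z*(Φ z) := by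
        field_simp
      have e2 : Q x*(z-x)/x = z*(Q x)/x - Q x := by
        field_simp
      rw [e1, e2]
      linarith
    apply Filter.Eventually.frequently
    filter_upwards [hev, hevle] with z h1 h2
    exact lt_of_le_of_lt h2 h1
  -- barrier argument
  obtain ⟨s2π, hs2π⟩ : ∃ t : ℝ, t = Real.sqrt (2*π) := ⟨_, rfl⟩
  have hs2πnn : 0 ≤ s2π := hs2π ▸ Real.sqrt_nonneg _
  have hs2πsq : s2π^2 = 2*π := by rw [hs2π]; exact Real.sq_sqrt h2π.le
  have hstep : ∀ δ : ℝ, 0 < δ →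
      Real.sqrt (Q b) ≤ Real.sqrt (Q a) + δ*(1+(b-a)) + s2π*(b^2-a^2) := by
    intro δ hδ
    obtain ⟨c0, hc0⟩ : ∃ t : ℝ, t = Real.sqrt (Q a) := ⟨_, rfl⟩
    have hc0nn : 0 ≤ c0 := hc0 ▸ Real.sqrt_nonneg _
    have hc0sq : c0^2 = Q a := by rw [hc0]; exact Real.sq_sqrt (hQnn a ha.le)
    have hinnder : ∀ x : ℝ, HasDerivAt (fun x => c0 + δ*(1+(x-a)) + s2π*(x^2-a^2))
        (δ + s2π*(2*x)) x := by
      intro x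
      have h1 : HasDerivAt (fun x : ℝ => c0 + δ*(1+(x-a))) δ x := by
        simpa using ((((hasDerivAt_id x).sub_const a).const_add 1).const_mul δ).const_add c0
      have h2 : HasDerivAt (fun x : ℝ => s2π*(x^2-a^2)) (s2π*(2*x)) x := by
        have := ((hasDerivAt_pow 2 x).sub_const (a^2)).const_mul s2π
        simpa using this
      exact h1.add h2
    have hBder : ∀ x : ℝ, HasDerivAt (fun x => (c0 + δ*(1+(x-a)) + s2π*(x^2-a^2))^2)
        (2*(c0 + δ*(1+(x-a)) + s2π*(x^2-a^2))*(δ + s2π*(2*x))) x := by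
      intro x
      have := (hinnder x).fun_pow 2
      simpa [mul_comm, mul_assoc, mul_left_comm] using this
    have hinnpos : ∀ x, a ≤ x → 0 < c0 + δ*(1+(x-a)) + s2π*(x^2-a^2) := by
      intro x hax
      have h1 : 0 ≤ s2π*(x^2-a^2) := by
        apply mul_nonneg hs2πnn
        nlinarith [hr₀.trans ha]
      nlinarith
    have hmain := image_le_of_liminf_slope_right_lt_deriv_boundary'
      (f := Q) (f' := fun x => 4*x*P x) (a := a) (b := b)
      (hQc.mono (fun y hy => le_trans ha.le hy.1))
      (fun x hx r hr => hslope x hx.1 r hr)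
      (B := fun x => (c0 + δ*(1+(x-a)) + s2π*(x^2-a^2))^2)
      (B' := fun x => 2*(c0 + δ*(1+(x-a)) + s2π*(x^2-a^2))*(δ + s2π*(2*x)))
      ?ha ?hBc (fun x _ => (hBder x).hasDerivWithinAt) ?hbound
    case ha =>
      rw [← hc0sq]
      show c0^2 ≤ (c0 + δ*(1+(a-a)) + s2π*(a^2-a^2))^2
      have he : c0 + δ*(1+(a-a)) + s2π*(a^2-a^2) = c0 + δ := by ring
      rw [he]
      nlinarith
    case hBc =>
      apply Continuous.continuousOn
      fun_prop
    case hbound =>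
      intro x hx hQB
      have hax : a ≤ x := hx.1
      have hrx : r₀ < x := lt_of_lt_of_le ha hax
      have hx0 : (0:ℝ) < x := hr₀.trans hrx
      have hinnx := hinnpos x hax
      have hPle : P x ≤ s2π * (c0 + δ*(1+(x-a)) + s2π*(x^2-a^2)) := by
        apply pen_sq_le (hPnn x hrx)
          (mul_nonneg hs2πnn hinnx.le)
        calc P x^2 ≤ 2*π*Q x := hPsq x hrx
          _ = (s2π * (c0 + δ*(1+(x-a)) + s2π*(x^2-a^2)))^2 := by
              rw [hQB, mul_pow, hs2πsq]
      exact pen_arith hx0 hs2πnn hδ hinnx hPle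
    have hQbB := hmain (right_mem_Icc.2 hab)
    have hBb : Real.sqrt ((c0 + δ*(1+(b-a)) + s2π*(b^2-a^2))^2)
        = c0 + δ*(1+(b-a)) + s2π*(b^2-a^2) := Real.sqrt_sq (hinnpos b hab).le
    calc Real.sqrt (Q b) ≤ Real.sqrt ((c0 + δ*(1+(b-a)) + s2π*(b^2-a^2))^2) :=
          Real.sqrt_le_sqrt hQbB
      _ = c0 + δ*(1+(b-a)) + s2π*(b^2-a^2) := hBb
      _ = Real.sqrt (Q a) + δ*(1+(b-a)) + s2π*(b^2-a^2) := by rw [hc0]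
  -- let δ → 0
  have h1ba : (0:ℝ) < 1 + (b-a) := by linarith
  rw [← hs2π]
  apply le_of_forall_pos_le_add
  intro ε hε
  have hst := hstep (ε/(1+(b-a))) (by positivity)
  have hεeq : (ε/(1+(b-a)))*(1+(b-a)) = ε := by field_simp
  calc Real.sqrt (Q b)
      ≤ Real.sqrt (Q a) + (ε/(1+(b-a)))*(1+(b-a)) + s2π*(b^2-a^2) := hst
    _ = Real.sqrt (Q a) + s2π*(b^2-a^2) + ε := by rw [hεeq]; ring

private lemma pen_sqbound {Qb X : ℝ} (hQnnb : 0 ≤ Qb)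
    (h : Real.sqrt Qb ≤ Real.sqrt (2*π)*X) : Qb ≤ 2*π*X^2 := by
  have h2π : (0:ℝ) < 2*π := by positivity
  calc Qb = (Real.sqrt Qb)^2 := (Real.sq_sqrt hQnnb).symm
    _ ≤ (Real.sqrt (2*π)*X)^2 := pow_le_pow_left₀ (Real.sqrt_nonneg _) h 2
    _ = 2*π*X^2 := by rw [mul_pow, Real.sq_sqrt h2π.le]

set_option maxHeartbeats 1000000 in
/-- The asymptotic mass comparison: an upper bound `Q ≤ 2π(b²-r₀²-η)²` for all
large `b` forces `2π(r₀²+η) ≤ M`. -/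
private lemma pen_final {r₀ : ℝ} (hr₀ : 0 < r₀) {f : ℝ → ℝ → ℝ} {μ : ℝ → ℝ}
    {Q : ℝ → ℝ} {M Cμ : ℝ}
    (hQs : ∀ s, Q s = ∫ φ in (0:ℝ)..(2*π), (f s φ)^2)
    (hsl : ∀ s : ℝ, r₀ ≤ s → Continuous (fun φ => f s φ))
    (hμc : Continuous μ) (hM : M = ∫ φ in (0:ℝ)..(2*π), μ φ)
    (hCμ : ∀ φ, |μ φ| ≤ Cμ)
    (hasym : ∀ ε > (0:ℝ), ∃ R : ℝ, ∀ r ≥ R, ∀ φ : ℝ, |f r φ - r ^ 2 + μ φ| < ε)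
    {η : ℝ} (hη : 0 ≤ η) {b₁ : ℝ} (hb₁ : r₀ ≤ b₁)
    (hQup : ∀ b, b₁ ≤ b → Q b ≤ 2*π*(b^2 - r₀^2 - η)^2) :
    2*π*(r₀^2 + η) ≤ M := by
  have hπ : (0:ℝ) < π := Real.pi_pos
  have h2π : (0:ℝ) < 2*π := by positivity
  have hμint : IntervalIntegrable μ volume 0 (2*π) := hμc.intervalIntegrable _ _
  have hμ2int : IntervalIntegrable (fun φ => (μ φ)^2) volume 0 (2*π) :=
    (hμc.pow 2).intervalIntegrable _ _
  apply le_of_forall_pos_le_add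
  intro ε hε
  obtain ⟨ε', hε'pos, hε'eq⟩ : ∃ e : ℝ, 0 < e ∧ 4*π*e = ε :=
    ⟨ε/(4*π), by positivity, by field_simp⟩
  obtain ⟨R, hara⟩ := hasym ε' hε'pos
  obtain ⟨L, hL⟩ : ∃ L : ℝ, L = r₀^2 + η := ⟨_, rfl⟩
  obtain ⟨b, hbb₁, hbR, hbX1, hbX2⟩ : ∃ b : ℝ, b₁ ≤ b ∧ R ≤ b ∧ Cμ + ε' ≤ b^2 ∧
      2*π*L^2 + 2*ε'*|M| ≤ ε*b^2 := by
    have hCμnn : 0 ≤ Cμ := le_trans (abs_nonneg _) (hCμ 0)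
    refine ⟨max b₁ (max R (max (Real.sqrt (Cμ + ε'))
      (Real.sqrt ((2*π*L^2 + 2*ε'*|M|)/ε)))), le_max_left _ _,
      le_trans (le_max_left _ _) (le_max_right _ _), ?_, ?_⟩
    · have h1 : Real.sqrt (Cμ + ε') ≤ max b₁ (max R (max (Real.sqrt (Cμ + ε'))
          (Real.sqrt ((2*π*L^2 + 2*ε'*|M|)/ε)))) :=
        le_trans (le_max_left _ _) (le_trans (le_max_right _ _) (le_max_right _ _))
      have h2 := pow_le_pow_left₀ (Real.sqrt_nonneg (Cμ + ε')) h1 2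
      rwa [Real.sq_sqrt (by positivity : (0:ℝ) ≤ Cμ + ε')] at h2
    · have h1 : Real.sqrt ((2*π*L^2 + 2*ε'*|M|)/ε) ≤ max b₁ (max R (max (Real.sqrt (Cμ + ε'))
          (Real.sqrt ((2*π*L^2 + 2*ε'*|M|)/ε)))) :=
        le_trans (le_max_right _ _) (le_trans (le_max_right _ _) (le_max_right _ _))
      have h2 := pow_le_pow_left₀ (Real.sqrt_nonneg ((2*π*L^2 + 2*ε'*|M|)/ε)) h1 2
      rw [Real.sq_sqrt (by positivity : (0:ℝ) ≤ (2*π*L^2 + 2*ε'*|M|)/ε)] at h2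
      rw [div_le_iff₀ hε] at h2
      nlinarith [h2]
  have hbr₀ : r₀ ≤ b := hb₁.trans hbb₁
  have hbpos : 0 < b := lt_of_lt_of_le hr₀ hbr₀
  have hflow : ∀ φ, b^2 - μ φ - ε' ≤ f b φ ∧ 0 ≤ b^2 - μ φ - ε' := by
    intro φ
    have h1 := abs_lt.mp (hara b hbR φ)
    constructor
    · linarith [h1.1]
    · have := (abs_le.mp (hCμ φ)).2
      linarith
  have hQlow : (∫ φ in (0:ℝ)..(2*π), (b^2 - μ φ - ε')^2) ≤ Q b := by
    rw [hQs]
    apply intervalIntegral.integral_mono_on h2π.le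
      ((((continuous_const.sub hμc).sub continuous_const).pow 2).intervalIntegrable _ _)
      (((hsl b hbr₀).pow 2).intervalIntegrable _ _)
    intro φ _
    exact pow_le_pow_left₀ (hflow φ).2 (hflow φ).1 2
  have hExp : (∫ φ in (0:ℝ)..(2*π), (b^2 - μ φ - ε')^2)
      = 2*π*(b^2-ε')^2 - 2*(b^2-ε')*M + ∫ φ in (0:ℝ)..(2*π), (μ φ)^2 := by
    have hpt : ∀ φ : ℝ, (b^2 - μ φ - ε')^2
        = (b^2-ε')^2 - 2*(b^2-ε')*(μ φ) + (μ φ)^2 := by intro φ; ring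
    simp only [hpt]
    rw [intervalIntegral.integral_add (intervalIntegrable_const.sub
        (hμint.const_mul _)) hμ2int,
      intervalIntegral.integral_sub intervalIntegrable_const (hμint.const_mul _),
      intervalIntegral.integral_const_mul, intervalIntegral.integral_const, ← hM]
    simp
    try ring
  have hμ2nn : 0 ≤ ∫ φ in (0:ℝ)..(2*π), (μ φ)^2 :=
    intervalIntegral.integral_nonneg h2π.le (fun u _ => sq_nonneg _)
  have hup := hQup b hbb₁
  have hXpos : 0 < b^2 := by positivity
  have hcomb : 2*π*(b^2-ε')^2 - 2*(b^2-ε')*M ≤ 2*π*(b^2 - (r₀^2+η))^2 := by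
    have : 2*π*(b^2 - r₀^2 - η)^2 = 2*π*(b^2 - (r₀^2+η))^2 := by ring
    rw [← this]
    linarith [hQlow, hExp, hμ2nn, hup]
  obtain ⟨X, hX⟩ : ∃ X : ℝ, X = b^2 := ⟨_, rfl⟩
  rw [← hX] at hcomb hbX2 hXpos
  rw [← hL] at hcomb
  have hexp2 : 4*π*L*X ≤ 4*π*ε'*X + 2*X*M + 2*π*L^2 - 2*π*ε'^2 - 2*ε'*M := by linarith [hcomb]
  have habs : -(2*ε'*M) ≤ 2*ε'*|M| :=
    le_trans (by nlinarith [neg_abs_le M, hε'pos.le] : -(2*ε'*M) ≤ 2*ε'*|M|) le_rfl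
  have he3 : 4*π*ε'*X = ε*X := by rw [← hε'eq]
  have h2' : 4*π*L*X ≤ 2*ε*X + 2*X*M := by
    have hε2 : 0 ≤ 2*π*ε'^2 := by positivity
    linarith [hexp2, habs, hbX2, he3.le, he3.ge]
  have hLM : 2*π*L ≤ M + ε := by nlinarith [h2', hXpos]
  rw [hL] at hLM
  linarith

set_option maxHeartbeats 2000000 in
/-- A Penrose-type inequality: if the metric `g = f⁻¹ dr² + r² dφ²` on
`[r₀, ∞) × S¹` has an outermost minimal geodesic at `r = r₀` (where
`f` vanishes), scalar curvature `R_f ≥ −2`, and mass-aspect function `μ`,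
then the Hamiltonian mass `H = (1/(2π)) ∫₀^{2π} μ` satisfies `H ≥ r₀²`,
with equality only for `f(r, φ) = r² − r₀²`. -/
theorem penrose_type_inequality (r₀ : ℝ) (hr₀ : 0 < r₀) (f : ℝ → ℝ → ℝ)
    (hf : ContDiffOn ℝ (⊤ : ℕ∞) (fun p : ℝ × ℝ => f p.1 p.2)
      (Set.Ici r₀ ×ˢ (Set.univ : Set ℝ)))
    (hnn : ∀ r ∈ Set.Ici r₀, ∀ φ : ℝ, 0 ≤ f r φ)
    (hzero : ∀ φ : ℝ, f r₀ φ = 0)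
    (hpos : ∀ r : ℝ, r₀ < r → ∀ φ : ℝ, 0 < f r φ)
    (hper : ∀ r ∈ Set.Ici r₀, ∀ φ : ℝ, f r (φ + 2 * π) = f r φ)
    (hR : ∀ r : ℝ, r₀ < r → ∀ φ : ℝ, -2 ≤ scalarCurv f r φ)
    (μ : ℝ → ℝ) (hμc : Continuous μ) (hμp : Function.Periodic μ (2 * π))
    (hasym : ∀ ε > (0:ℝ), ∃ R : ℝ, ∀ r ≥ R, ∀ φ : ℝ,
      |f r φ - r ^ 2 + μ φ| < ε) :
    r₀ ^ 2 ≤ (1 / (2 * π)) * ∫ φ in (0:ℝ)..(2 * π), μ φ ∧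
      ((1 / (2 * π)) * (∫ φ in (0:ℝ)..(2 * π), μ φ) = r₀ ^ 2 →
        ∀ r : ℝ, r₀ ≤ r → ∀ φ : ℝ, f r φ = r ^ 2 - r₀ ^ 2) := by
  have hπ : (0:ℝ) < π := Real.pi_pos
  have h2π : (0:ℝ) < 2*π := by positivity
  -- the open region
  set U : Set (ℝ × ℝ) := Set.Ioi r₀ ×ˢ (Set.univ : Set ℝ) with hUdef
  have hUo : IsOpen U := isOpen_Ioi.prod isOpen_univ
  have hmem : ∀ {s φ : ℝ}, r₀ < s → (s, φ) ∈ U := fun h => ⟨h, trivial⟩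
  have hUsub : U ⊆ Set.Ici r₀ ×ˢ (Set.univ : Set ℝ) :=
    Set.prod_mono (Set.Ioi_subset_Ici le_rfl) le_rfl
  have hfU : ContDiffOn ℝ (⊤ : ℕ∞) (fun p : ℝ × ℝ => f p.1 p.2) U := hf.mono hUsub
  have hgc : ContinuousOn (fun p : ℝ × ℝ => f p.1 p.2)
      (Set.Ici r₀ ×ˢ (Set.univ : Set ℝ)) := hf.continuousOn
  -- slice continuity in φ
  have hsl : ∀ s : ℝ, r₀ ≤ s → Continuous (fun φ => f s φ) := by
    intro s hs
    exact hgc.comp_continuous (continuous_const.prodMk continuous_id)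
      (fun φ => ⟨hs, trivial⟩)
  -- first fderiv
  set FD : ℝ × ℝ → (ℝ × ℝ) →L[ℝ] ℝ := fderiv ℝ (fun p : ℝ × ℝ => f p.1 p.2) with hFDdef
  have hFDc : ContDiffOn ℝ (⊤ : ℕ∞) FD U := hfU.fderiv_of_isOpen hUo (by simp)
  have hder : ∀ (s φ : ℝ), r₀ < s →
      HasFDerivAt (fun p : ℝ × ℝ => f p.1 p.2) (FD (s, φ)) (s, φ) := by
    intro s φ h
    exact ((hfU.contDiffAt (hUo.mem_nhds (hmem h))).differentiableAt (by simp)).hasFDerivAt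
  have hRder : ∀ (s φ : ℝ), r₀ < s →
      HasDerivAt (fun u => f u φ) (FD (s, φ) ((1:ℝ), (0:ℝ))) s := by
    intro s φ h
    have h0 : HasDerivAt (fun u : ℝ => (u, φ)) ((1:ℝ), (0:ℝ)) s :=
      HasDerivAt.prodMk (hasDerivAt_id s) (hasDerivAt_const s φ)
    exact (hder s φ h).comp_hasDerivAt s h0
  have hpR : ∀ (s φ : ℝ), r₀ < s → pderivR f s φ = FD (s, φ) ((1:ℝ), (0:ℝ)) := by
    intro s φ h
    exact (hRder s φ h).deriv
  have hφder : ∀ (s t : ℝ), r₀ < s →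
      HasDerivAt (fun t' => f s t') (FD (s, t) ((0:ℝ), (1:ℝ))) t := by
    intro s t h
    have h0 : HasDerivAt (fun t' : ℝ => (s, t')) ((0:ℝ), (1:ℝ)) t :=
      HasDerivAt.prodMk (hasDerivAt_const t s) (hasDerivAt_id t)
    exact (hder s t h).comp_hasDerivAt t h0
  have hpφ : ∀ (s t : ℝ), r₀ < s → pderivPhi f s t = FD (s, t) ((0:ℝ), (1:ℝ)) := by
    intro s t h
    exact (hφder s t h).deriv
  -- second φ-derivative
  set G2 : ℝ × ℝ → ℝ := fun p => FD p ((0:ℝ), (1:ℝ)) with hG2def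
  have hG2c : ContDiffOn ℝ (⊤ : ℕ∞) G2 U := hFDc.clm_apply contDiffOn_const
  set FD2 : ℝ × ℝ → (ℝ × ℝ) →L[ℝ] ℝ := fderiv ℝ G2 with hFD2def
  have hFD2c : ContinuousOn FD2 U := (hG2c.fderiv_of_isOpen (m := 0) hUo (by simp)).continuousOn
  have hφ2der : ∀ (s φ : ℝ), r₀ < s →
      HasDerivAt (deriv (fun t => f s t)) (FD2 (s, φ) ((0:ℝ), (1:ℝ))) φ := by
    intro s φ h
    have hG2d : HasFDerivAt G2 (FD2 (s, φ)) (s, φ) :=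
      ((hG2c.contDiffAt (hUo.mem_nhds (hmem h))).differentiableAt (by simp)).hasFDerivAt
    have h0 : HasDerivAt (fun t' : ℝ => (s, t')) ((0:ℝ), (1:ℝ)) φ :=
      HasDerivAt.prodMk (hasDerivAt_const φ s) (hasDerivAt_id φ)
    have h1 : HasDerivAt (fun t => G2 (s, t)) (FD2 (s, φ) ((0:ℝ), (1:ℝ))) φ :=
      hG2d.comp_hasDerivAt φ h0
    have he : (deriv fun t => f s t) = fun t => G2 (s, t) :=
      funext fun t => (hφder s t h).deriv
    rw [he]
    exact h1
  have hpφ2 : ∀ (s φ : ℝ), r₀ < s →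
      pderivPhi2 f s φ = FD2 (s, φ) ((0:ℝ), (1:ℝ)) := by
    intro s φ h
    exact (hφ2der s φ h).deriv
  -- joint continuity of the partial derivatives
  have cF : ContinuousOn (fun p : ℝ × ℝ => f p.1 p.2) U := hfU.continuousOn
  have cR : ContinuousOn (fun p : ℝ × ℝ => FD p ((1:ℝ), (0:ℝ))) U :=
    (hFDc.continuousOn).clm_apply continuousOn_const
  have cφ2 : ContinuousOn (fun p : ℝ × ℝ => FD2 p ((0:ℝ), (1:ℝ))) U :=
    hFD2c.clm_apply continuousOn_const

  -- the integral quantities P and Q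
  obtain ⟨P, hPdef⟩ : ∃ P : ℝ → ℝ, P = fun s => ∫ φ in (0:ℝ)..(2*π), f s φ := ⟨_, rfl⟩
  obtain ⟨Q, hQdef⟩ : ∃ Q : ℝ → ℝ, Q = fun s => ∫ φ in (0:ℝ)..(2*π), (f s φ)^2 := ⟨_, rfl⟩
  have hPs : ∀ s, P s = ∫ φ in (0:ℝ)..(2*π), f s φ := fun s => by rw [hPdef]
  have hQs : ∀ s, Q s = ∫ φ in (0:ℝ)..(2*π), (f s φ)^2 := fun s => by rw [hQdef]
  have hjc : Continuous (fun p : ↥(Set.Ici r₀) × ℝ => f p.1.1 p.2) :=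
    hgc.comp_continuous ((continuous_subtype_val.comp continuous_fst).prodMk
      continuous_snd) (fun p => ⟨p.1.2, trivial⟩)
  have hQc : ContinuousOn Q (Set.Ici r₀) := by
    rw [hQdef, continuousOn_iff_continuous_restrict]
    exact intervalIntegral.continuous_parametric_intervalIntegral_of_continuous'
      (f := fun (x : ↥(Set.Ici r₀)) φ => (f x.1 φ)^2) (hjc.fun_pow 2) 0 (2*π)
  have hPc : ContinuousOn P (Set.Ici r₀) := by
    rw [hPdef, continuousOn_iff_continuous_restrict]
    exact intervalIntegral.continuous_parametric_intervalIntegral_of_continuous'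
      (f := fun (x : ↥(Set.Ici r₀)) φ => f x.1 φ) hjc 0 (2*π)
  have hQr₀ : Q r₀ = 0 := by rw [hQs]; simp [hzero]
  have hQnn : ∀ s, r₀ ≤ s → 0 ≤ Q s := by
    intro s hs
    rw [hQs]
    exact intervalIntegral.integral_nonneg h2π.le (fun u _ => sq_nonneg _)
  have hPnn : ∀ s, r₀ < s → 0 ≤ P s := by
    intro s hs
    rw [hPs]
    exact intervalIntegral.integral_nonneg h2π.le (fun u _ => (hpos s hs u).le)
  have hQpos : ∀ s, r₀ < s → 0 < Q s := by
    intro s hs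
    rw [hQs]
    exact intervalIntegral.intervalIntegral_pos_of_pos
      (((hsl s hs.le).pow 2).intervalIntegrable _ _)
      (fun φ => pow_pos (hpos s hs φ) 2) h2π
  -- Cauchy-Schwarz (via an elementary trick): P² ≤ 2π Q
  have hPsq : ∀ s, r₀ < s → P s^2 ≤ 2*π*Q s := by
    intro s hs
    rcases eq_or_lt_of_le (hPnn s hs) with hP0 | hPpos
    · rw [← hP0]
      have := hQnn s hs.le
      nlinarith
    · obtain ⟨c, hkey⟩ : ∃ c : ℝ, 2*π*c = P s := ⟨P s/(2*π), by field_simp⟩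
      have hcpos : 0 < c := by nlinarith
      have hmono : P s ≤ (1/(2*c))*Q s + (2*π)*(c/2) := by
        have hptw : ∀ φ ∈ Set.Icc (0:ℝ) (2*π), f s φ ≤ (1/(2*c))*(f s φ)^2 + c/2 := by
          intro φ _
          rw [← sub_nonneg]
          have he : 1/(2*c)*(f s φ)^2 + c/2 - f s φ = (f s φ - c)^2/(2*c) := by
            field_simp
            ring
          rw [he]
          positivity
        have hint1 : IntervalIntegrable (fun φ => f s φ) volume 0 (2*π) :=
          (hsl s hs.le).intervalIntegrable _ _
        have hint2 : IntervalIntegrable (fun φ => (1/(2*c))*(f s φ)^2 + c/2) volume 0 (2*π) :=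
          ((continuous_const.mul ((hsl s hs.le).pow 2)).add continuous_const).intervalIntegrable _ _
        have := intervalIntegral.integral_mono_on h2π.le hint1 hint2 hptw
        rw [← hPs] at this
        have he : (∫ φ in (0:ℝ)..(2*π), ((1/(2*c))*(f s φ)^2 + c/2))
            = (1/(2*c))*Q s + (2*π)*(c/2) := by
          rw [intervalIntegral.integral_add (f := fun φ => (1/(2*c))*(f s φ)^2) (g := fun _ => c/2) ((continuous_const.mul ((hsl s hs.le).fun_pow 2)).intervalIntegrable _ _)
            intervalIntegrable_const, intervalIntegral.integral_const_mul,
            intervalIntegral.integral_const, ← hQs]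
          simp
          try ring
        rw [he] at this
        exact this
      have h2c : (0:ℝ) < 2*c := by positivity
      have h5 : π*c ≤ Q s/(2*c) := by
        have e1 : (1/(2*c))*Q s = Q s/(2*c) := by ring
        have e2 : (2*π)*(c/2) = π*c := by ring
        rw [e1, e2] at hmono
        linarith [hkey, hmono]
      have h6 : π*c*(2*c) ≤ Q s := (le_div_iff₀ h2c).mp h5
      nlinarith [hkey, h6, hπ]
  -- pointwise radial derivative of f²/(2s)
  have hDer : ∀ s, r₀ < s → ∀ φ, HasDerivAt (fun u => (f u φ)^2/(2*u))
      ((f s φ*(FD (s,φ) ((1:ℝ),(0:ℝ))))/s - (f s φ)^2/(2*s^2)) s := by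
    intro s hs φ
    have hs0 : (0:ℝ) < s := hr₀.trans hs
    have h1 := (hRder s φ hs).fun_pow 2
    have h2 : HasDerivAt (fun u : ℝ => 2*u) 2 s := by
      simpa using (hasDerivAt_id s).const_mul (2:ℝ)
    have h3 := h1.div h2 (by positivity)
    refine h3.congr_deriv ?_
    field_simp
    ring
  have hDle : ∀ s, r₀ < s → ∀ φ,
      (f s φ*(FD (s,φ) ((1:ℝ),(0:ℝ))))/s - (f s φ)^2/(2*s^2)
        ≤ 2*f s φ + (FD2 (s,φ) ((0:ℝ),(1:ℝ)))/s^2 - (f s φ)^2/(2*s^2) := by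
    intro s hs φ
    have hc := hR s hs φ
    simp only [scalarCurv] at hc
    rw [hpR s φ hs, hpφ s φ hs, hpφ2 s φ hs] at hc
    exact pen_curv (hr₀.trans hs) (hpos s hs φ) hc
  -- FTC in φ : the second angular derivative integrates to zero
  have hG3cont : ∀ s, r₀ < s → Continuous (fun φ => FD2 (s,φ) ((0:ℝ),(1:ℝ))) := by
    intro s hs
    exact cφ2.comp_continuous (continuous_const.prodMk continuous_id)
      (fun φ => hmem hs)
  have hFTCφ : ∀ s, r₀ < s → (∫ φ in (0:ℝ)..(2*π), FD2 (s,φ) ((0:ℝ),(1:ℝ))) = 0 := by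
    intro s hs
    have heq : ∀ φ ∈ Set.uIcc (0:ℝ) (2*π),
        HasDerivAt (deriv (fun t => f s t)) (FD2 (s,φ) ((0:ℝ),(1:ℝ))) φ :=
      fun φ _ => hφ2der s φ hs
    have hint : IntervalIntegrable (fun φ => FD2 (s,φ) ((0:ℝ),(1:ℝ))) volume 0 (2*π) :=
      (hG3cont s hs).intervalIntegrable _ _
    rw [intervalIntegral.integral_eq_sub_of_hasDerivAt heq hint]
    have hfuneq : (fun t => f s (t + 2*π)) = fun t => f s t :=
      funext (fun t => hper s hs.le t)
    have h1 : deriv (fun t => f s t) (0 + 2*π) = deriv (fun t => f s t) 0 := by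
      rw [← deriv_comp_add_const (fun t => f s t) (2*π) 0, hfuneq]
    have h02 : (2*π : ℝ) = 0 + 2*π := by ring
    rw [h02, h1, sub_self]
  -- joint continuity of the integrands
  have hDjc : ContinuousOn (fun p : ℝ × ℝ =>
      (f p.1 p.2*(FD p ((1:ℝ),(0:ℝ))))/p.1 - (f p.1 p.2)^2/(2*p.1^2)) U := by
    apply ContinuousOn.sub
    · exact (cF.mul cR).div continuous_fst.continuousOn
        (fun p hp => ne_of_gt (hr₀.trans hp.1))
    · exact (cF.pow 2).div (continuous_const.mul (continuous_fst.pow 2)).continuousOn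
        (fun p hp => by
          have : (0:ℝ) < p.1 := hr₀.trans hp.1
          positivity)
  have hFjc : ContinuousOn (fun p : ℝ × ℝ =>
      2*f p.1 p.2 + (FD2 p ((0:ℝ),(1:ℝ)))/p.1^2 - (f p.1 p.2)^2/(2*p.1^2)) U := by
    apply ContinuousOn.sub
    · apply ContinuousOn.add
      · exact continuousOn_const.mul cF
      · exact cφ2.div (continuous_fst.pow 2).continuousOn
          (fun p hp => by
            have : (0:ℝ) < p.1 := hr₀.trans hp.1
            positivity)
    · exact (cF.pow 2).div (continuous_const.mul (continuous_fst.pow 2)).continuousOn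
        (fun p hp => by
          have : (0:ℝ) < p.1 := hr₀.trans hp.1
          positivity)
  -- THE KEY INTEGRAL INEQUALITY
  have key : ∀ a b, r₀ < a → a ≤ b →
      Q b/(2*b) - Q a/(2*a) ≤ ∫ s in a..b, (2*P s - Q s/(2*s^2)) := by
    intro a b ha hab
    have hsubU : Set.Icc a b ×ˢ Set.Icc (0:ℝ) (2*π) ⊆ U :=
      fun p hp => ⟨lt_of_lt_of_le ha hp.1.1, trivial⟩
    have hmemst : ∀ s ∈ Set.Icc a b, ∀ t : ℝ, (s, t) ∈ U :=
      fun s hs t => ⟨lt_of_lt_of_le ha hs.1, trivial⟩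
    -- step 1 : pointwise in φ
    have step1 : ∀ φ, (f b φ)^2/(2*b) - (f a φ)^2/(2*a)
        ≤ ∫ s in a..b, (2*f s φ + (FD2 (s,φ) ((0:ℝ),(1:ℝ)))/s^2 - (f s φ)^2/(2*s^2)) := by
      intro φ
      have hintD : IntervalIntegrable
          (fun s => (f s φ*(FD (s,φ) ((1:ℝ),(0:ℝ))))/s - (f s φ)^2/(2*s^2)) volume a b := by
        apply ContinuousOn.intervalIntegrable
        apply hDjc.comp (continuous_id.prodMk continuous_const).continuousOn
        intro s hs
        rw [Set.uIcc_of_le hab] at hs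
        exact hmemst s hs φ
      have hintF : IntervalIntegrable
          (fun s => 2*f s φ + (FD2 (s,φ) ((0:ℝ),(1:ℝ)))/s^2 - (f s φ)^2/(2*s^2)) volume a b := by
        apply ContinuousOn.intervalIntegrable
        apply hFjc.comp (continuous_id.prodMk continuous_const).continuousOn
        intro s hs
        rw [Set.uIcc_of_le hab] at hs
        exact hmemst s hs φ
      have hFTC : (∫ s in a..b, ((f s φ*(FD (s,φ) ((1:ℝ),(0:ℝ))))/s - (f s φ)^2/(2*s^2)))
          = (f b φ)^2/(2*b) - (f a φ)^2/(2*a) := by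
        apply intervalIntegral.integral_eq_sub_of_hasDerivAt
        · intro s hsmem
          rw [Set.uIcc_of_le hab] at hsmem
          exact hDer s (lt_of_lt_of_le ha hsmem.1) φ
        · exact hintD
      rw [← hFTC]
      apply intervalIntegral.integral_mono_on hab hintD hintF
      intro s hs
      exact hDle s (lt_of_lt_of_le ha hs.1) φ
    -- step 2 : linearity
    have hab' : r₀ ≤ a := ha.le
    have hb' : r₀ ≤ b := ha.le.trans hab
    have hint_fb : IntervalIntegrable (fun φ => (f b φ)^2/(2*b)) volume 0 (2*π) :=
      (((hsl b hb').pow 2).div_const _).intervalIntegrable _ _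
    have hint_fa : IntervalIntegrable (fun φ => (f a φ)^2/(2*a)) volume 0 (2*π) :=
      (((hsl a hab').pow 2).div_const _).intervalIntegrable _ _
    have step2 : Q b/(2*b) - Q a/(2*a)
        = ∫ φ in (0:ℝ)..(2*π), ((f b φ)^2/(2*b) - (f a φ)^2/(2*a)) := by
      rw [intervalIntegral.integral_sub hint_fb hint_fa,
        intervalIntegral.integral_div, intervalIntegral.integral_div, ← hQs, ← hQs]
    -- step 3 : monotonicity plus integrability of the iterated integral
    have hFjcIcc : ContinuousOn (fun p : ℝ × ℝ =>
        2*f p.1 p.2 + (FD2 p ((0:ℝ),(1:ℝ)))/p.1^2 - (f p.1 p.2)^2/(2*p.1^2))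
        (Set.Icc a b ×ˢ Set.Icc (0:ℝ) (2*π)) := hFjc.mono hsubU
    have hGint : IntervalIntegrable
        (fun φ => ∫ s in a..b, (2*f s φ + (FD2 (s,φ) ((0:ℝ),(1:ℝ)))/s^2 - (f s φ)^2/(2*s^2)))
        volume 0 (2*π) := by
      rw [intervalIntegrable_iff, Set.uIoc_of_le h2π.le]
      have hswapc : ContinuousOn (fun p : ℝ × ℝ =>
          2*f p.2 p.1 + (FD2 (p.2,p.1) ((0:ℝ),(1:ℝ)))/p.2^2 - (f p.2 p.1)^2/(2*p.2^2))
          (Set.Icc (0:ℝ) (2*π) ×ˢ Set.Icc a b) := by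
        have hmaps : Set.MapsTo (Prod.swap : ℝ × ℝ → ℝ × ℝ)
            (Set.Icc (0:ℝ) (2*π) ×ˢ Set.Icc a b) (Set.Icc a b ×ˢ Set.Icc (0:ℝ) (2*π)) :=
          fun p hp => ⟨hp.2, hp.1⟩
        exact hFjcIcc.comp continuous_swap.continuousOn hmaps
      have hIntOn : IntegrableOn (fun p : ℝ × ℝ =>
          2*f p.2 p.1 + (FD2 (p.2,p.1) ((0:ℝ),(1:ℝ)))/p.2^2 - (f p.2 p.1)^2/(2*p.2^2))
          (Set.Icc (0:ℝ) (2*π) ×ˢ Set.Icc a b) volume :=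
        hswapc.integrableOn_compact (isCompact_Icc.prod isCompact_Icc)
      have hIntProd : Integrable (Function.uncurry (fun φ s =>
          2*f s φ + (FD2 (s,φ) ((0:ℝ),(1:ℝ)))/s^2 - (f s φ)^2/(2*s^2)))
          ((volume.restrict (Set.Ioc (0:ℝ) (2*π))).prod (volume.restrict (Set.Ioc a b))) := by
        rw [Measure.prod_restrict]
        have hvol : (volume : Measure (ℝ × ℝ)) = (volume : Measure ℝ).prod volume :=
          Measure.volume_eq_prod ℝ ℝ
        rw [← hvol]
        exact hIntOn.mono_set (Set.prod_mono Set.Ioc_subset_Icc_self Set.Ioc_subset_Icc_self)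
      have := hIntProd.integral_prod_left
      apply Integrable.congr this
      filter_upwards with φ
      rw [intervalIntegral.integral_of_le hab]
      rfl
    have hdiffint : IntervalIntegrable
        (fun φ => (f b φ)^2/(2*b) - (f a φ)^2/(2*a)) volume 0 (2*π) := hint_fb.sub hint_fa
    have step3 : (∫ φ in (0:ℝ)..(2*π), ((f b φ)^2/(2*b) - (f a φ)^2/(2*a)))
        ≤ ∫ φ in (0:ℝ)..(2*π), (∫ s in a..b,
          (2*f s φ + (FD2 (s,φ) ((0:ℝ),(1:ℝ)))/s^2 - (f s φ)^2/(2*s^2))) :=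
      intervalIntegral.integral_mono_on h2π.le hdiffint hGint (fun φ _ => step1 φ)
    -- step 4 : Fubini
    have step4 : (∫ φ in (0:ℝ)..(2*π), (∫ s in a..b,
          (2*f s φ + (FD2 (s,φ) ((0:ℝ),(1:ℝ)))/s^2 - (f s φ)^2/(2*s^2))))
        = ∫ s in a..b, (∫ φ in (0:ℝ)..(2*π),
          (2*f s φ + (FD2 (s,φ) ((0:ℝ),(1:ℝ)))/s^2 - (f s φ)^2/(2*s^2))) :=
      pen_fubini hab h2π.le hFjcIcc
    -- step 5 : evaluate the inner integral
    have step5 : (∫ s in a..b, (∫ φ in (0:ℝ)..(2*π),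
          (2*f s φ + (FD2 (s,φ) ((0:ℝ),(1:ℝ)))/s^2 - (f s φ)^2/(2*s^2))))
        = ∫ s in a..b, (2*P s - Q s/(2*s^2)) := by
      apply intervalIntegral.integral_congr
      intro s hs
      beta_reduce
      rw [Set.uIcc_of_le hab] at hs
      have hrs : r₀ < s := lt_of_lt_of_le ha hs.1
      have hs0 : (0:ℝ) < s := hr₀.trans hrs
      have i1 : IntervalIntegrable (fun φ => 2*f s φ) volume 0 (2*π) :=
        (continuous_const.mul (hsl s hrs.le)).intervalIntegrable _ _
      have i2 : IntervalIntegrable (fun φ => (FD2 (s,φ) ((0:ℝ),(1:ℝ)))/s^2) volume 0 (2*π) :=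
        (((hG3cont s hrs)).div_const _).intervalIntegrable _ _
      have i3 : IntervalIntegrable (fun φ => (f s φ)^2/(2*s^2)) volume 0 (2*π) :=
        (((hsl s hrs.le).pow 2).div_const _).intervalIntegrable _ _
      rw [intervalIntegral.integral_sub (i1.add i2) i3, intervalIntegral.integral_add i1 i2,
        intervalIntegral.integral_div, intervalIntegral.integral_div,
        intervalIntegral.integral_const_mul, hFTCφ s hrs, ← hPs, ← hQs]
      rw [zero_div, add_zero]
    rw [step2]
    calc (∫ φ in (0:ℝ)..(2*π), ((f b φ)^2/(2*b) - (f a φ)^2/(2*a)))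
        ≤ _ := step3
      _ = _ := step4
      _ = _ := step5
  -- continuity of the comparison integrand
  have hhc : ContinuousOn (fun s => 2*P s - Q s/(2*s^2)) (Set.Ioi r₀) := by
    apply ContinuousOn.sub
    · exact continuousOn_const.mul (hPc.mono Set.Ioi_subset_Ici_self)
    · exact (hQc.mono Set.Ioi_subset_Ici_self).div
        (continuous_const.mul (continuous_pow 2)).continuousOn
        (fun s hs => by
          have : (0:ℝ) < s := hr₀.trans hs
          positivity)
  have hCOMP : ∀ a b, r₀ < a → a ≤ b →
      Real.sqrt (Q b) ≤ Real.sqrt (Q a) + Real.sqrt (2*π)*(b^2 - a^2) :=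
    fun a b ha hab => pen_comp hr₀ hQc hQnn hPnn hPsq key hhc ha hab
  -- extend the comparison down to r₀ by continuity
  have hSQ' : ∀ b₀ b, r₀ ≤ b₀ → b₀ ≤ b →
      Real.sqrt (Q b) ≤ Real.sqrt (Q b₀) + Real.sqrt (2*π)*(b^2 - b₀^2) := by
    intro b₀ b hb₀ hb
    rcases eq_or_lt_of_le hb₀ with he | hlt
    · subst he
      rcases eq_or_lt_of_le hb with heb | hltb
      · subst heb
        simp [hQr₀]
      · have hten : Filter.Tendsto (fun a => Real.sqrt (Q a) + Real.sqrt (2*π)*(b^2 - a^2))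
            (nhdsWithin r₀ (Set.Ioi r₀))
            (nhds (Real.sqrt (Q r₀) + Real.sqrt (2*π)*(b^2 - r₀^2))) := by
          apply Filter.Tendsto.add
          · exact (Real.continuous_sqrt.tendsto _).comp
              ((hQc r₀ Set.self_mem_Ici).tendsto.mono_left
                (nhdsWithin_mono r₀ Set.Ioi_subset_Ici_self))
          · exact ((continuous_const.mul
              (continuous_const.sub (continuous_pow 2))).tendsto r₀).mono_left
              nhdsWithin_le_nhds
        rw [hQr₀, Real.sqrt_zero, zero_add] at hten
        rw [hQr₀, Real.sqrt_zero, zero_add]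
        apply ge_of_tendsto hten
        filter_upwards [Ioc_mem_nhdsGT_of_mem (Set.left_mem_Ico.2 hltb)] with a haa
        exact hCOMP a b haa.1 haa.2
    · exact hCOMP b₀ b hlt hb
  -- the mass integral and a bound for μ
  obtain ⟨M, hM⟩ : ∃ M : ℝ, M = ∫ φ in (0:ℝ)..(2*π), μ φ := ⟨_, rfl⟩
  have hfinal : ∀ η : ℝ, 0 ≤ η → ∀ b₁ : ℝ, r₀ ≤ b₁ →
      (∀ b, b₁ ≤ b → Q b ≤ 2*π*(b^2 - r₀^2 - η)^2) → 2*π*(r₀^2 + η) ≤ M := by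
    obtain ⟨Cμ, hCμ⟩ : ∃ C : ℝ, ∀ φ, |μ φ| ≤ C := by
      obtain ⟨C, hC⟩ := (isCompact_Icc (a := (0:ℝ)) (b := 2*π)).exists_bound_of_continuousOn
        hμc.continuousOn
      refine ⟨C, fun φ => ?_⟩
      obtain ⟨y, hy, hyeq⟩ := hμp.exists_mem_Ico₀ h2π φ
      rw [hyeq, ← Real.norm_eq_abs]
      exact hC y (Set.Ico_subset_Icc_self hy)
    intro η hη b₁ hb₁ hQup
    exact pen_final hr₀ hQs hsl hμc hM hCμ hasym hη hb₁ hQup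
  -- PART 1
  have hSQb : ∀ b, r₀ ≤ b → Real.sqrt (Q b) ≤ Real.sqrt (2*π)*(b^2 - r₀^2) := by
    intro b hb
    have := hSQ' r₀ b le_rfl hb
    rwa [hQr₀, Real.sqrt_zero, zero_add] at this
  have hQub : ∀ b, r₀ ≤ b → Q b ≤ 2*π*(b^2 - r₀^2)^2 := fun b hb =>
    pen_sqbound (hQnn b hb) (hSQb b hb)
  have hMlow : 2*π*r₀^2 ≤ M := by
    have := hfinal 0 le_rfl r₀ le_rfl (fun b hb => by simpa using hQub b hb)
    linarith
  constructor
  · rw [← hM, show (1:ℝ)/(2*π) * M = M/(2*π) by ring, le_div_iff₀ h2π]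
    linarith
  · -- EQUALITY CASE
    intro hMeq r hr φ₀
    rw [← hM] at hMeq
    have hMval : M = 2*π*r₀^2 := by
      field_simp at hMeq
      linarith
    -- Claim A : Q is exactly the model
    have hA : ∀ b, r₀ ≤ b → Q b = 2*π*(b^2 - r₀^2)^2 := by
      intro b hb
      by_contra hne
      have hlt : Q b < 2*π*(b^2 - r₀^2)^2 := lt_of_le_of_ne (hQub b hb) hne
      have hbr : r₀ < b := by
        rcases eq_or_lt_of_le hb with he | h
        · exfalso
          rw [← he, hQr₀] at hlt
          norm_num at hlt
        · exact h
      have hrhs : (0:ℝ) ≤ b^2 - r₀^2 := by nlinarith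
      have hsqlt : Real.sqrt (Q b) < Real.sqrt (2*π)*(b^2 - r₀^2) := by
        have h1 : Real.sqrt (Q b) < Real.sqrt (2*π*(b^2 - r₀^2)^2) :=
          Real.sqrt_lt_sqrt (hQnn b hb) hlt
        rwa [Real.sqrt_mul h2π.le, Real.sqrt_sq hrhs] at h1
      obtain ⟨η, hηeq⟩ : ∃ η : ℝ, Real.sqrt (2*π)*η
          = Real.sqrt (2*π)*(b^2 - r₀^2) - Real.sqrt (Q b) :=
        ⟨(Real.sqrt (2*π)*(b^2 - r₀^2) - Real.sqrt (Q b))/Real.sqrt (2*π),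
          by field_simp⟩
      have hs2πpos : 0 < Real.sqrt (2*π) := Real.sqrt_pos.2 h2π
      have hηpos : 0 < η := by nlinarith
      have hQupη : ∀ b', b ≤ b' → Q b' ≤ 2*π*(b'^2 - r₀^2 - η)^2 := by
        intro b' hb'
        have h2 := hSQ' b b' hb hb'
        have h3 : Real.sqrt (Q b') ≤ Real.sqrt (2*π)*(b'^2 - r₀^2 - η) := by
          have he4 : Real.sqrt (2*π)*(b'^2 - r₀^2 - η)
              = Real.sqrt (Q b) + Real.sqrt (2*π)*(b'^2 - b^2) := by
            have : Real.sqrt (2*π)*(b'^2 - r₀^2 - η) = Real.sqrt (2*π)*(b'^2 - b^2)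
                + (Real.sqrt (2*π)*(b^2 - r₀^2) - Real.sqrt (2*π)*η) := by ring
            rw [this, hηeq]
            ring
          rw [he4]
          exact h2
        exact pen_sqbound (hQnn b' (hb.trans hb')) h3
      have := hfinal η hηpos.le b hb hQupη
      rw [hMval] at this
      nlinarith
    -- Claim B : P is exactly the model
    have hB : ∀ s, r₀ < s → P s = 2*π*(s^2 - r₀^2) := by
      intro s hs
      obtain ⟨a, ha, has⟩ : ∃ a : ℝ, r₀ < a ∧ a < s := ⟨(r₀+s)/2, by linarith, by linarith⟩
      set b' := s + 1 with hb'def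
      have hsb' : s < b' := by simp [hb'def]
      have hab' : a ≤ b' := by linarith
      have hsmem : s ∈ Set.Icc a b' := ⟨has.le, hsb'.le⟩
      have hposIcc : ∀ x ∈ Set.Icc a b', r₀ < x := fun x hx => lt_of_lt_of_le ha hx.1
      -- FTC for the model
      have hVder : ∀ x ∈ Set.uIcc a b', HasDerivAt (fun x => π*(x^2 - r₀^2)^2/x)
          (4*π*(x^2 - r₀^2) - 2*π*(x^2 - r₀^2)^2/(2*x^2)) x := by
        intro x hx
        rw [Set.uIcc_of_le hab'] at hx
        have hx0 : (0:ℝ) < x := hr₀.trans (hposIcc x hx)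
        have h1 : HasDerivAt (fun x : ℝ => π*(x^2 - r₀^2)^2)
            (π*(2*(x^2 - r₀^2)*(2*x))) x := by
          have h0 : HasDerivAt (fun x : ℝ => (x^2 - r₀^2)) (2*x) x := by
            simpa using (hasDerivAt_pow 2 x).sub_const (r₀^2)
          simpa [mul_comm, mul_assoc, mul_left_comm] using (h0.fun_pow 2).const_mul π
        have h2 := h1.div (hasDerivAt_id x) (ne_of_gt hx0)
        refine h2.congr_deriv ?_
        simp only [id]
        field_simp
        ring
      have hmodc : ContinuousOn (fun x : ℝ => 4*π*(x^2 - r₀^2) - 2*π*(x^2 - r₀^2)^2/(2*x^2))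
          (Set.uIcc a b') := by
        rw [Set.uIcc_of_le hab']
        apply ContinuousOn.sub
        · exact (continuous_const.mul ((continuous_pow 2).sub continuous_const)).continuousOn
        · exact (continuous_const.mul (((continuous_pow 2).sub continuous_const).pow 2)).continuousOn.div
            (continuous_const.mul (continuous_pow 2)).continuousOn
            (fun x hx => by
              have : (0:ℝ) < x := hr₀.trans (hposIcc x hx)
              positivity)
      have hFTCmod : (∫ x in a..b', (4*π*(x^2 - r₀^2) - 2*π*(x^2 - r₀^2)^2/(2*x^2)))
          = π*(b'^2 - r₀^2)^2/b' - π*(a^2 - r₀^2)^2/a :=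
        intervalIntegral.integral_eq_sub_of_hasDerivAt hVder hmodc.intervalIntegrable
      -- the key inequality with Q replaced by the model
      have hk := key a b' ha hab'
      have hQa : Q a = 2*π*(a^2 - r₀^2)^2 := hA a ha.le
      have hQb' : Q b' = 2*π*(b'^2 - r₀^2)^2 := hA b' (ha.le.trans hab')
      have ha0 : (0:ℝ) < a := hr₀.trans ha
      have hb'0 : (0:ℝ) < b' := by linarith
      have hLHS : Q b'/(2*b') - Q a/(2*a) = π*(b'^2 - r₀^2)^2/b' - π*(a^2 - r₀^2)^2/a := by
        rw [hQa, hQb']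
        field_simp
      have hcongr : (∫ x in a..b', (2*P x - Q x/(2*x^2)))
          = ∫ x in a..b', (2*P x - 2*π*(x^2 - r₀^2)^2/(2*x^2)) := by
        apply intervalIntegral.integral_congr
        intro x hx
        beta_reduce
        rw [Set.uIcc_of_le hab'] at hx
        rw [hA x (hposIcc x hx).le]
      have hPint : IntervalIntegrable (fun x => 2*P x) volume a b' := by
        apply ContinuousOn.intervalIntegrable
        rw [Set.uIcc_of_le hab']
        exact continuousOn_const.mul (hPc.mono (fun x hx => (hposIcc x hx).le))
      have hmod2int : IntervalIntegrable (fun x => 2*π*(x^2 - r₀^2)^2/(2*x^2)) volume a b' := by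
        apply ContinuousOn.intervalIntegrable
        rw [Set.uIcc_of_le hab']
        exact (continuous_const.mul (((continuous_pow 2).sub continuous_const).pow 2)).continuousOn.div
          (continuous_const.mul (continuous_pow 2)).continuousOn
          (fun x hx => by
            have : (0:ℝ) < x := hr₀.trans (hposIcc x hx)
            positivity)
      have hmod1int : IntervalIntegrable (fun x : ℝ => 4*π*(x^2 - r₀^2)) volume a b' := by
        apply ContinuousOn.intervalIntegrable
        exact (continuous_const.mul ((continuous_pow 2).sub continuous_const)).continuousOn
      -- deduce ∫ (4π(x²-r₀²) - 2 P x) ≤ 0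
      have hgle : (∫ x in a..b', (4*π*(x^2 - r₀^2) - 2*P x)) ≤ 0 := by
        have e1 : (∫ x in a..b', (4*π*(x^2 - r₀^2) - 2*P x))
            = (∫ x in a..b', (4*π*(x^2 - r₀^2) - 2*π*(x^2 - r₀^2)^2/(2*x^2)))
              - ∫ x in a..b', (2*P x - 2*π*(x^2 - r₀^2)^2/(2*x^2)) := by
          rw [← intervalIntegral.integral_sub (hmod1int.sub hmod2int) (hPint.sub hmod2int)]
          apply intervalIntegral.integral_congr
          intro x _
          ring
        rw [e1, hFTCmod]
        rw [hcongr] at hk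
        rw [hLHS] at hk
        linarith
      -- the integrand is continuous and nonneg, hence vanishes
      have hgcont : ContinuousOn (fun x => 4*π*(x^2 - r₀^2) - 2*P x) (Set.Icc a b') :=
        (continuous_const.mul ((continuous_pow 2).sub continuous_const)).continuousOn.sub
          (continuousOn_const.mul (hPc.mono (fun x hx => (hposIcc x hx).le)))
      have hgnn : ∀ x ∈ Set.Icc a b', 0 ≤ 4*π*(x^2 - r₀^2) - 2*P x := by
        intro x hx
        have hrx : r₀ < x := hposIcc x hx
        have hxr : (0:ℝ) ≤ x^2 - r₀^2 := by nlinarith [hr₀.trans hrx]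
        have hPx : P x ≤ 2*π*(x^2 - r₀^2) := by
          apply pen_sq_le (hPnn x hrx) (by positivity)
          calc P x^2 ≤ 2*π*Q x := hPsq x hrx
            _ = (2*π*(x^2 - r₀^2))^2 := by rw [hA x hrx.le]; ring
        linarith
      have hgz := pen_zero (show a < b' by linarith) hgcont hgnn hgle
      have := hgz s hsmem
      linarith
    -- Claim C : f is exactly the model
    have hC : ∀ s, r₀ < s → ∀ φ, f s φ = s^2 - r₀^2 := by
      intro s hs φ
      obtain ⟨cs, hcs⟩ : ∃ c : ℝ, c = s^2 - r₀^2 := ⟨_, rfl⟩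
      have hcspos : 0 < cs := by rw [hcs]; nlinarith [hr₀.trans hs]
      have hintzero : (∫ t in (0:ℝ)..(2*π), (f s t - cs)^2) = 0 := by
        have hpt : ∀ t : ℝ, (f s t - cs)^2 = (f s t)^2 - 2*cs*(f s t) + cs^2 := by
          intro t; ring
        simp only [hpt]
        rw [intervalIntegral.integral_add (f := fun t => (f s t)^2 - 2*cs*(f s t)) (g := fun _ => cs^2) ((((hsl s hs.le).fun_pow 2).sub
            (continuous_const.mul (hsl s hs.le))).intervalIntegrable _ _)
            intervalIntegrable_const,
          intervalIntegral.integral_sub (f := fun t => (f s t)^2) (g := fun t => 2*cs*(f s t)) (((hsl s hs.le).fun_pow 2).intervalIntegrable _ _)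
            ((continuous_const.mul (hsl s hs.le)).intervalIntegrable _ _),
          intervalIntegral.integral_const_mul, intervalIntegral.integral_const,
          ← hQs, ← hPs, hA s hs.le, hB s hs, hcs]
        simp
        ring
      have hvanish := pen_zero h2π (g := fun t => (f s t - cs)^2)
        (((hsl s hs.le).sub continuous_const).pow 2).continuousOn
        (fun t _ => sq_nonneg _) (le_of_eq hintzero)
      have hper2 : Function.Periodic (fun t => f s t) (2*π) := fun t => hper s hs.le t
      obtain ⟨y, hy, hyeq⟩ := hper2.exists_mem_Ico₀ h2π φ
      have hzy : (f s y - cs)^2 = 0 := hvanish y (Set.Ico_subset_Icc_self hy)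
      have hzy2 : f s y - cs = 0 := by
        exact pow_eq_zero_iff (by norm_num : (2:ℕ) ≠ 0) |>.mp hzy
      have : f s y = cs := by linarith
      rw [hcs] at this
      rw [hyeq, this]
    rcases eq_or_lt_of_le hr with he | h
    · rw [← he, hzero φ₀]
      ring
    · rw [hC r h φ₀]
end

section
/- (Positivity of mass in the polar gauge.) Let f : [0, ∞) × ℝ → (0, ∞) be smooth, 2π-periodic in its second argument φ, with f(0, φ) = 1 for all φ. Assume R_f(r, φ) ≥ −2 for all r > 0 and all φ, and that there is a continuous 2π-periodic function μ : ℝ → ℝ with sup_φ | f(r, φ) − r² + μ(φ) | → 0 as r → ∞. Then the Hamiltonian mass H := (1/(2π)) ∫₀^{2π} μ(φ) dφ satisfies H ≥ −1, with equality if and only if f(r, φ) = r² + 1 for all r and φ (hyperbolic space). -/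
open Real MeasureTheory

open Set Filter Topology

/-- The derivative of a periodic function is periodic. -/
lemma aux_periodic_deriv {g : ℝ → ℝ} {c : ℝ} (hg : Function.Periodic g c) :
    Function.Periodic (deriv g) c := by
  intro x
  have h1 : deriv g (x + c) = deriv (fun y => g (y + c)) x :=
    (deriv_comp_add_const g c x).symm
  rw [h1]
  congr 1
  exact funext fun y => hg y

/-- A nonnegative continuous function with zero integral over `[0, 2π]` vanishes there. -/
lemma aux_eq_zero_of_integral_zero {g : ℝ → ℝ} (hg : Continuous g)
    (hnn : ∀ x, 0 ≤ g x) (h0 : (∫ x in (0:ℝ)..(2*π), g x) = 0) :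
    ∀ x ∈ Set.Icc (0:ℝ) (2*π), g x = 0 := by
  have hπ : (0:ℝ) < 2 * π := by positivity
  have key : ∀ y ∈ Set.Ioo (0:ℝ) (2*π), g y = 0 := by
    intro y hy
    by_contra hne
    have hgy : 0 < g y := lt_of_le_of_ne (hnn y) (Ne.symm hne)
    obtain ⟨δ, hδ, hball⟩ := Metric.continuousAt_iff.1 hg.continuousAt (g y / 2) (by positivity)
    set u : ℝ := max (y - δ/2) 0 with hu
    set v : ℝ := min (y + δ/2) (2*π) with hv
    have huy : u < y := max_lt (by linarith) hy.1
    have hyv : y < v := lt_min (by linarith) hy.2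
    have huv : u < v := huy.trans hyv
    have hpos : ∀ x ∈ Set.Ioo u v, 0 < g x := by
      intro x hx
      have h1 : y - δ/2 ≤ u := le_max_left _ _
      have h2 : v ≤ y + δ/2 := min_le_left _ _
      have hd : dist x y < δ := by
        rw [Real.dist_eq, abs_lt]; constructor <;> nlinarith [hx.1, hx.2]
      have := hball hd
      rw [Real.dist_eq, abs_lt] at this
      linarith [this.1, this.2]
    have hint : ∀ a b : ℝ, IntervalIntegrable g volume a b :=
      fun a b => hg.intervalIntegrable a b
    have hmid : 0 < ∫ x in u..v, g x :=
      intervalIntegral.intervalIntegral_pos_of_pos_on (hint u v) hpos huv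
    have h0u : 0 ≤ u := le_max_right _ _
    have hv2 : v ≤ 2*π := min_le_right _ _
    have e1 : (∫ x in (0:ℝ)..u, g x) + (∫ x in u..v, g x) = ∫ x in (0:ℝ)..v, g x :=
      intervalIntegral.integral_add_adjacent_intervals (hint 0 u) (hint u v)
    have e2 : (∫ x in (0:ℝ)..v, g x) + (∫ x in v..(2*π), g x) = ∫ x in (0:ℝ)..(2*π), g x :=
      intervalIntegral.integral_add_adjacent_intervals (hint 0 v) (hint v (2*π))
    have n1 : 0 ≤ ∫ x in (0:ℝ)..u, g x :=
      intervalIntegral.integral_nonneg h0u (fun x _ => hnn x)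
    have n3 : 0 ≤ ∫ x in v..(2*π), g x :=
      intervalIntegral.integral_nonneg hv2 (fun x _ => hnn x)
    linarith
  intro x hx
  rcases eq_or_lt_of_le hx.1 with h1 | h1
  · by_contra hne
    have hgx : 0 < g x := lt_of_le_of_ne (hnn x) (Ne.symm hne)
    obtain ⟨δ, hδ, hball⟩ := Metric.continuousAt_iff.1 hg.continuousAt (g x / 2) (by positivity)
    set y : ℝ := min (δ/2) π with hy
    have hy0 : 0 < y := lt_min (by linarith) pi_pos
    have hyI : y ∈ Set.Ioo (0:ℝ) (2*π) :=
      ⟨hy0, lt_of_le_of_lt (min_le_right _ _) (by linarith [pi_pos])⟩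
    have hd : dist y x < δ := by
      rw [← h1, Real.dist_eq, sub_zero, abs_of_pos hy0]
      exact lt_of_le_of_lt (min_le_left _ _) (by linarith)
    have h3 := hball hd
    rw [Real.dist_eq, abs_lt] at h3
    have h4 := key y hyI
    linarith [h3.1, h3.2]
  rcases eq_or_lt_of_le hx.2 with h2 | h2
  · by_contra hne
    have hgx : 0 < g x := lt_of_le_of_ne (hnn x) (Ne.symm hne)
    obtain ⟨δ, hδ, hball⟩ := Metric.continuousAt_iff.1 hg.continuousAt (g x / 2) (by positivity)
    set y : ℝ := max (2*π - δ/2) π with hy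
    have hy2 : y < 2*π := max_lt (by linarith) (by linarith [pi_pos])
    have hyI : y ∈ Set.Ioo (0:ℝ) (2*π) := ⟨lt_of_lt_of_le pi_pos (le_max_right _ _), hy2⟩
    have hd : dist y x < δ := by
      rw [h2, Real.dist_eq, abs_lt]
      constructor
      · have h5 := le_max_left (2*π - δ/2) π; nlinarith
      · linarith
    have h3 := hball hd
    rw [Real.dist_eq, abs_lt] at h3
    have h4 := key y hyI
    linarith [h3.1, h3.2]
  · exact key x ⟨h1, h2⟩


/-- Positivity of mass in the polar gauge: if the metric
`g = f⁻¹ dr² + r² dφ²` on `[0, ∞) × S¹` has a regular center (`f(0, ·) = 1`),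
scalar curvature `R_f ≥ −2`, and mass-aspect function `μ`, then the
Hamiltonian mass `H = (1/(2π)) ∫₀^{2π} μ` satisfies `H ≥ −1`, with equality
if and only if `f(r, φ) = r² + 1` (hyperbolic space). -/
theorem mass_positivity_polar_gauge (f : ℝ → ℝ → ℝ)
    (hf : ContDiffOn ℝ (⊤ : ℕ∞) (fun p : ℝ × ℝ => f p.1 p.2)
      (Set.Ici (0:ℝ) ×ˢ (Set.univ : Set ℝ)))
    (hpos : ∀ r ∈ Set.Ici (0:ℝ), ∀ φ : ℝ, 0 < f r φ)
    (hcenter : ∀ φ : ℝ, f 0 φ = 1)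
    (hper : ∀ r ∈ Set.Ici (0:ℝ), ∀ φ : ℝ, f r (φ + 2 * π) = f r φ)
    (hR : ∀ r : ℝ, 0 < r → ∀ φ : ℝ, -2 ≤ scalarCurv f r φ)
    (μ : ℝ → ℝ) (hμc : Continuous μ) (hμp : Function.Periodic μ (2 * π))
    (hasym : ∀ ε > (0:ℝ), ∃ R : ℝ, ∀ r ≥ R, ∀ φ : ℝ,
      |f r φ - r ^ 2 + μ φ| < ε) :
    -1 ≤ (1 / (2 * π)) * ∫ φ in (0:ℝ)..(2 * π), μ φ ∧
      ((1 / (2 * π)) * (∫ φ in (0:ℝ)..(2 * π), μ φ) = -1 ↔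
        ∀ r : ℝ, 0 ≤ r → ∀ φ : ℝ, f r φ = r ^ 2 + 1) := by
  have h2π : (0:ℝ) < 2 * π := by positivity
  -- ## Smoothness infrastructure
  have hcd : ∀ {r φ : ℝ}, 0 < r → ContDiffAt ℝ (⊤ : ℕ∞) (fun p : ℝ × ℝ => f p.1 p.2) (r, φ) := by
    intro r φ hr
    refine hf.contDiffAt ?_
    have h1 : Set.Ioi (0:ℝ) ×ˢ (Set.univ : Set ℝ) ∈ 𝓝 ((r, φ) : ℝ × ℝ) :=
      (isOpen_Ioi.prod isOpen_univ).mem_nhds ⟨hr, trivial⟩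
    exact Filter.mem_of_superset h1 (Set.prod_mono Set.Ioi_subset_Ici_self subset_rfl)
  have hslice : ∀ {r : ℝ}, 0 < r → ContDiff ℝ (⊤ : ℕ∞) (fun t => f r t) := by
    intro r hr
    rw [contDiff_iff_contDiffAt]
    intro φ
    have h1 : ContDiffAt ℝ (⊤ : ℕ∞) (fun p : ℝ × ℝ => f p.1 p.2) (r, φ) :=
      (hcd hr).of_le (by simp)
    exact h1.comp φ (contDiffAt_const.prodMk contDiffAt_id)
  have hasR : ∀ {r φ : ℝ}, 0 < r →
      HasDerivAt (fun s => f s φ)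
        (fderiv ℝ (fun p : ℝ × ℝ => f p.1 p.2) (r, φ) (1, 0)) r := by
    intro r φ hr
    have hF := ((hcd (φ := φ) hr).differentiableAt (by simp)).hasFDerivAt
    have hL : HasDerivAt (fun s : ℝ => ((s, φ) : ℝ × ℝ)) ((1:ℝ), (0:ℝ)) r :=
      (hasDerivAt_id r).prodMk (hasDerivAt_const r φ)
    exact hF.comp_hasDerivAt r hL
  have pderivR_eq : ∀ {r φ : ℝ}, 0 < r →
      pderivR f r φ = fderiv ℝ (fun p : ℝ × ℝ => f p.1 p.2) (r, φ) (1, 0) :=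
    fun hr => (hasR hr).deriv
  have hasRp : ∀ {r φ : ℝ}, 0 < r → HasDerivAt (fun s => f s φ) (pderivR f r φ) r := by
    intro r φ hr
    rw [pderivR_eq hr]
    exact hasR hr
  have contR : ContinuousOn (fun p : ℝ × ℝ => pderivR f p.1 p.2)
      (Set.Ioi (0:ℝ) ×ˢ (Set.univ : Set ℝ)) := by
    have hU : IsOpen (Set.Ioi (0:ℝ) ×ˢ (Set.univ : Set ℝ)) := isOpen_Ioi.prod isOpen_univ
    have h1 : ContDiffOn ℝ (⊤ : ℕ∞) (fun p : ℝ × ℝ => f p.1 p.2) (Set.Ioi 0 ×ˢ Set.univ) :=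
      hf.mono (Set.prod_mono Set.Ioi_subset_Ici_self subset_rfl)
    have h2 := h1.continuousOn_fderiv_of_isOpen hU (by simp)
    have h3 : ContinuousOn (fun p : ℝ × ℝ =>
        fderiv ℝ (fun p : ℝ × ℝ => f p.1 p.2) p ((1:ℝ), (0:ℝ))) (Set.Ioi 0 ×ˢ Set.univ) :=
      h2.clm_apply continuousOn_const
    refine h3.congr ?_
    intro p hp
    exact pderivR_eq hp.1
  have slicecontR : ∀ {r : ℝ}, 0 < r → Continuous (fun φ => pderivR f r φ) := by
    intro r hr
    exact contR.comp_continuous (continuous_const.prodMk continuous_id)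
      (fun φ => Set.mk_mem_prod hr (Set.mem_univ φ))
  -- slice continuity of f
  have hcontf : ∀ {r : ℝ}, 0 < r → Continuous (fun t => f r t) :=
    fun hr => (hslice hr).continuous
  have hfne : ∀ {r : ℝ}, 0 ≤ r → ∀ t, f r t ≠ 0 := fun hr t => (hpos _ hr t).ne'
  -- angular derivatives
  have cpφ : ∀ {r : ℝ}, 0 < r → Continuous (fun t => pderivPhi f r t) := by
    intro r hr
    exact ((contDiff_infty_iff_deriv.1 ((hslice hr))).2).continuous
  have cpφφ : ∀ {r : ℝ}, 0 < r → Continuous (fun t => pderivPhi2 f r t) := by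
    intro r hr
    exact ((contDiff_infty_iff_deriv.1
      ((contDiff_infty_iff_deriv.1 ((hslice hr))).2)).2).continuous
  have hd1 : ∀ {r : ℝ}, 0 < r → ∀ t, HasDerivAt (fun u => f r u) (pderivPhi f r t) t := by
    intro r hr t
    exact ((contDiff_infty_iff_deriv.1 ((hslice hr))).1 t).hasDerivAt
  have hd2 : ∀ {r : ℝ}, 0 < r → ∀ t,
      HasDerivAt (deriv (fun u => f r u)) (pderivPhi2 f r t) t := by
    intro r hr t
    exact (((contDiff_infty_iff_deriv.1
      ((contDiff_infty_iff_deriv.1 ((hslice hr))).2)).1) t).hasDerivAt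
  -- periodicity facts
  have hper_slice : ∀ {r : ℝ}, 0 ≤ r → Function.Periodic (fun t => f r t) (2*π) :=
    fun hr φ => hper _ hr φ
  have hperφ : ∀ {r : ℝ}, 0 < r → Function.Periodic (fun φ => pderivPhi f r φ) (2*π) :=
    fun hr => aux_periodic_deriv (hper_slice hr.le)
  have hperR : ∀ {r : ℝ}, 0 < r → Function.Periodic (fun φ => pderivR f r φ) (2*π) := by
    intro r hr φ
    have h1 : (fun s => f s (φ + 2*π)) =ᶠ[𝓝 r] (fun s => f s φ) := by
      filter_upwards [Ioi_mem_nhds hr] with s hs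
      exact hper s (Set.mem_Ici.2 (le_of_lt hs)) φ
    exact Filter.EventuallyEq.deriv_eq h1
  -- ## Derivative of the angular average
  have hWd : ∀ {r₀ : ℝ}, 0 < r₀ →
      HasDerivAt (fun r => ∫ φ in (0:ℝ)..(2*π), f r φ)
        (∫ φ in (0:ℝ)..(2*π), pderivR f r₀ φ) r₀ := by
    intro r₀ hr₀
    have hK : IsCompact ((Set.Icc (r₀/2) (r₀+r₀)) ×ˢ (Set.Icc (0:ℝ) (2*π))) :=
      isCompact_Icc.prod isCompact_Icc
    have hKU : (Set.Icc (r₀/2) (r₀+r₀)) ×ˢ (Set.Icc (0:ℝ) (2*π)) ⊆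
        Set.Ioi (0:ℝ) ×ˢ (Set.univ : Set ℝ) := by
      intro p hp
      exact ⟨lt_of_lt_of_le (by linarith) hp.1.1, trivial⟩
    obtain ⟨C, hC⟩ := hK.exists_bound_of_continuousOn (contR.mono hKU)
    refine (intervalIntegral.hasDerivAt_integral_of_dominated_loc_of_deriv_le
      (F := fun x t => f x t) (F' := fun x t => pderivR f x t) (a := (0:ℝ)) (b := 2*π)
      (x₀ := r₀) (bound := fun _ => C) (s := Metric.ball r₀ (r₀/2)) (Metric.ball_mem_nhds _ (by positivity))
      ?_ ?_ ?_ ?_ ?_ ?_).2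
    · filter_upwards [Ioi_mem_nhds hr₀] with x hx
      exact (hcontf hx).aestronglyMeasurable
    · exact (hcontf hr₀).intervalIntegrable _ _
    · exact (slicecontR hr₀).aestronglyMeasurable
    · refine Filter.Eventually.of_forall ?_
      intro t ht x hx
      have ht' : t ∈ Set.Icc (0:ℝ) (2*π) := by
        rw [Set.uIoc_of_le h2π.le] at ht
        exact Set.mem_Icc.2 ⟨ht.1.le, ht.2⟩
      have hx2 : x ∈ Set.Icc (r₀/2) (r₀+r₀) := by
        rw [Metric.mem_ball, Real.dist_eq, abs_lt] at hx
        constructor <;> [linarith [hx.1]; linarith [hx.2]]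
      exact hC ((x, t) : ℝ × ℝ) ⟨hx2, ht'⟩
    · exact intervalIntegrable_const
    · refine Filter.Eventually.of_forall ?_
      intro t ht x hx
      rw [Metric.mem_ball, Real.dist_eq, abs_lt] at hx
      exact hasRp (by linarith [hx.1])
  -- ## Key integral identity at fixed radius
  have hRcont : ∀ {r : ℝ}, 0 < r → Continuous (fun t => scalarCurv f r t) := by
    intro r hr
    have hrne : (r:ℝ) ≠ 0 := hr.ne'
    have c1 : Continuous (fun t => -(1/r) * pderivR f r t) :=
      continuous_const.mul (slicecontR hr)
    have c2 : Continuous (fun t => (1 / (r^2 * f r t)) * pderivPhi2 f r t) := by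
      refine Continuous.mul ?_ (cpφφ hr)
      exact continuous_const.div (continuous_const.mul (hcontf hr))
        (fun t => mul_ne_zero (pow_ne_zero _ hrne) (hfne hr.le t))
    have c3 : Continuous (fun t => (3 / (2 * r^2 * (f r t)^2)) * (pderivPhi f r t)^2) := by
      refine Continuous.mul ?_ ((cpφ hr).pow 2)
      refine continuous_const.div ((continuous_const.mul ((hcontf hr).pow 2))) ?_
      intro t
      exact mul_ne_zero (by positivity) (pow_ne_zero _ (hfne hr.le t))
    exact (c1.add c2).sub c3
  have hqcont : ∀ {r : ℝ}, 0 < r → Continuous (fun t => (pderivPhi f r t / f r t)^2) := by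
    intro r hr
    exact ((cpφ hr).div (hcontf hr) (hfne hr.le)).pow 2
  have hkey : ∀ {r : ℝ}, 0 < r →
      (∫ φ in (0:ℝ)..(2*π), pderivR f r φ) =
        -r * (∫ φ in (0:ℝ)..(2*π), scalarCurv f r φ)
          - (1/(2*r)) * (∫ φ in (0:ℝ)..(2*π), (pderivPhi f r φ / f r φ)^2) := by
    intro r hr
    have hrne : (r:ℝ) ≠ 0 := hr.ne'
    -- derivative of the logarithmic angular derivative
    set G : ℝ → ℝ := fun t => pderivPhi f r t / f r t with hGdef
    set G' : ℝ → ℝ := fun t =>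
      (pderivPhi2 f r t * f r t - pderivPhi f r t * pderivPhi f r t) / (f r t)^2 with hG'def
    have hG'cont : Continuous G' := by
      refine Continuous.div ?_ ((hcontf hr).pow 2) (fun t => pow_ne_zero _ (hfne hr.le t))
      exact ((cpφφ hr).mul (hcontf hr)).sub ((cpφ hr).mul (cpφ hr))
    have hGderiv : ∀ t, HasDerivAt G (G' t) t := by
      intro t
      exact (hd2 hr t).div (hd1 hr t) (hfne hr.le t)
    have hFTC : (∫ t in (0:ℝ)..(2*π), G' t) = G (2*π) - G 0 :=
      intervalIntegral.integral_eq_sub_of_hasDerivAt (fun t _ => hGderiv t)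
        (hG'cont.intervalIntegrable _ _)
    have hGper : G (2*π) = G 0 := by
      have e1 : (2*π : ℝ) = 0 + 2*π := by ring
      have h1 : pderivPhi f r (0 + 2*π) = pderivPhi f r 0 := hperφ hr 0
      have h2 : f r (0 + 2*π) = f r 0 := hper r hr.le 0
      simp only [hGdef]
      rw [e1, h1, h2]
    have hFTC0 : (∫ t in (0:ℝ)..(2*π), G' t) = 0 := by rw [hFTC, hGper, sub_self]
    -- pointwise identity
    have hpt : ∀ t, pderivR f r t =
        -r * scalarCurv f r t + (1/r) * G' t - (1/(2*r)) * (pderivPhi f r t / f r t)^2 := by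
      intro t
      have hu : f r t ≠ 0 := hfne hr.le t
      simp only [scalarCurv, hG'def]
      field_simp
      ring
    have hint1 : IntervalIntegrable (fun t => -r * scalarCurv f r t) volume 0 (2*π) :=
      (continuous_const.mul (hRcont hr)).intervalIntegrable _ _
    have hint2 : IntervalIntegrable (fun t => (1/r) * G' t) volume 0 (2*π) :=
      (continuous_const.mul hG'cont).intervalIntegrable _ _
    have hint3 : IntervalIntegrable (fun t => (1/(2*r)) * (pderivPhi f r t / f r t)^2)
        volume 0 (2*π) := (continuous_const.mul (hqcont hr)).intervalIntegrable _ _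
    calc (∫ φ in (0:ℝ)..(2*π), pderivR f r φ)
        = ∫ φ in (0:ℝ)..(2*π),
            (-r * scalarCurv f r φ + (1/r) * G' φ
              - (1/(2*r)) * (pderivPhi f r φ / f r φ)^2) := by
          exact intervalIntegral.integral_congr (fun t _ => hpt t)
      _ = (∫ φ in (0:ℝ)..(2*π), -r * scalarCurv f r φ)
            + (∫ φ in (0:ℝ)..(2*π), (1/r) * G' φ)
            - (∫ φ in (0:ℝ)..(2*π), (1/(2*r)) * (pderivPhi f r φ / f r φ)^2) := by
          rw [intervalIntegral.integral_sub (hint1.add hint2) hint3,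
            intervalIntegral.integral_add hint1 hint2]
      _ = -r * (∫ φ in (0:ℝ)..(2*π), scalarCurv f r φ)
            - (1/(2*r)) * (∫ φ in (0:ℝ)..(2*π), (pderivPhi f r φ / f r φ)^2) := by
          rw [intervalIntegral.integral_const_mul, intervalIntegral.integral_const_mul,
            intervalIntegral.integral_const_mul, hFTC0]
          ring
  -- ## The differential inequality W' ≤ 4πr
  have hIRlb : ∀ {r : ℝ}, 0 < r →
      -(4*π) ≤ ∫ φ in (0:ℝ)..(2*π), scalarCurv f r φ := by
    intro r hr
    have h1 : (∫ φ in (0:ℝ)..(2*π), (-2 : ℝ)) ≤ ∫ φ in (0:ℝ)..(2*π), scalarCurv f r φ := by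
      refine intervalIntegral.integral_mono_on h2π.le (intervalIntegrable_const)
        ((hRcont hr).intervalIntegrable _ _) ?_
      intro x _
      exact hR r hr x
    have h2 : (∫ φ in (0:ℝ)..(2*π), (-2 : ℝ)) = -(4*π) := by
      simp [intervalIntegral.integral_const]
      ring
    linarith
  have hIQnn : ∀ {r : ℝ}, 0 < r →
      0 ≤ ∫ φ in (0:ℝ)..(2*π), (pderivPhi f r φ / f r φ)^2 :=
    fun hr => intervalIntegral.integral_nonneg h2π.le (fun x _ => sq_nonneg _)
  have hWD4 : ∀ {r : ℝ}, 0 < r →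
      (∫ φ in (0:ℝ)..(2*π), pderivR f r φ) ≤ 4*π*r := by
    intro r hr
    have h1 := hkey hr
    have h2 := hIRlb hr
    have h3 := hIQnn (r := r) hr
    have h4 : (1/(2*r)) * (∫ φ in (0:ℝ)..(2*π), (pderivPhi f r φ / f r φ)^2) ≥ 0 := by
      have : (0:ℝ) < 1/(2*r) := by positivity
      positivity
    nlinarith
  -- ## Monotonicity of the comparison function Φ
  have hmono : ∀ a b : ℝ, 0 < a → a ≤ b →
      2*π*(1+a^2) - (∫ φ in (0:ℝ)..(2*π), f a φ) ≤
        2*π*(1+b^2) - (∫ φ in (0:ℝ)..(2*π), f b φ) := by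
    intro a b ha hab
    rcases eq_or_lt_of_le hab with rfl | hab
    · exact le_refl _
    have hΦd : ∀ x : ℝ, 0 < x →
        HasDerivAt (fun r => 2*π*(1+r^2) - (∫ φ in (0:ℝ)..(2*π), f r φ))
          (4*π*x - (∫ φ in (0:ℝ)..(2*π), pderivR f x φ)) x := by
      intro x hx
      have h1 : HasDerivAt (fun r : ℝ => 2*π*(1+r^2)) (4*π*x) x := by
        have h2 : HasDerivAt (fun r : ℝ => r^2) (2*x) x := by
          simpa using hasDerivAt_pow 2 x
        have h3 := (h2.const_add (1:ℝ)).const_mul (2*π)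
        refine h3.congr_deriv ?_
        ring
      exact h1.sub (hWd hx)
    have hcont : ContinuousOn (fun r => 2*π*(1+r^2) - (∫ φ in (0:ℝ)..(2*π), f r φ))
        (Set.Icc a b) := by
      intro x hx
      exact ((hΦd x (lt_of_lt_of_le ha hx.1)).continuousAt).continuousWithinAt
    obtain ⟨c, hc, hceq⟩ := exists_hasDerivAt_eq_slope
      (fun r => 2*π*(1+r^2) - (∫ φ in (0:ℝ)..(2*π), f r φ))
      (fun x => 4*π*x - (∫ φ in (0:ℝ)..(2*π), pderivR f x φ)) hab hcont
      (fun x hx => hΦd x (lt_trans ha hx.1))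
    have hc0 : 0 < c := lt_trans ha hc.1
    have h5 := hWD4 hc0
    have h6 : 0 ≤ (4*π*c - (∫ φ in (0:ℝ)..(2*π), pderivR f c φ)) := by linarith
    rw [hceq] at h6
    have h7 : 0 < b - a := by linarith
    have h8 := mul_nonneg h6 h7.le
    rw [div_mul_cancel₀ _ h7.ne'] at h8
    linarith [h8]
  -- ## Small-radius behaviour of the average
  have hWsmall : ∀ ε : ℝ, 0 < ε → ∀ b : ℝ, 0 < b →
      ∃ a : ℝ, 0 < a ∧ a ≤ b ∧ (∫ φ in (0:ℝ)..(2*π), f a φ) ≤ 2*π + ε := by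
    intro ε hε b hb
    have hK : IsCompact ((Set.Icc (0:ℝ) 1) ×ˢ (Set.Icc (0:ℝ) (2*π))) :=
      isCompact_Icc.prod isCompact_Icc
    have hFK : ContinuousOn (fun p : ℝ × ℝ => f p.1 p.2)
        ((Set.Icc (0:ℝ) 1) ×ˢ (Set.Icc (0:ℝ) (2*π))) :=
      hf.continuousOn.mono (fun p hp => ⟨hp.1.1, trivial⟩)
    have hUC := hK.uniformContinuousOn_of_continuous hFK
    have hε' : 0 < ε / (2*π+1) := by positivity
    obtain ⟨δ, hδ, hH⟩ := Metric.uniformContinuousOn_iff.1 hUC (ε/(2*π+1)) hε'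
    set a : ℝ := min (min (δ/2) b) 1 with ha
    have ha0 : 0 < a := lt_min (lt_min (by linarith) hb) one_pos
    have hab : a ≤ b := le_trans (min_le_left _ _) (min_le_right _ _)
    have ha1 : a ≤ 1 := min_le_right _ _
    have haδ : a < δ :=
      lt_of_le_of_lt (le_trans (min_le_left _ _) (min_le_left _ _)) (by linarith)
    refine ⟨a, ha0, hab, ?_⟩
    have hpt : ∀ φ ∈ Set.Icc (0:ℝ) (2*π), f a φ ≤ 1 + ε/(2*π+1) := by
      intro φ hφ
      have hmem1 : ((a, φ) : ℝ × ℝ) ∈ (Set.Icc (0:ℝ) 1) ×ˢ (Set.Icc (0:ℝ) (2*π)) :=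
        ⟨⟨ha0.le, ha1⟩, hφ⟩
      have hmem2 : (((0:ℝ), φ) : ℝ × ℝ) ∈ (Set.Icc (0:ℝ) 1) ×ˢ (Set.Icc (0:ℝ) (2*π)) :=
        ⟨⟨le_refl 0, zero_le_one⟩, hφ⟩
      have hdist : dist ((a, φ) : ℝ × ℝ) (((0:ℝ), φ) : ℝ × ℝ) < δ := by
        rw [Prod.dist_eq]
        have e1 : dist a (0:ℝ) = a := by rw [Real.dist_eq, sub_zero, abs_of_pos ha0]
        have e2 : dist φ φ = 0 := dist_self φ
        rw [e1, e2]
        simpa [max_eq_left ha0.le] using haδ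
      have h3 := hH _ hmem1 _ hmem2 hdist
      simp only [Real.dist_eq] at h3
      rw [hcenter φ] at h3
      have h4 := abs_lt.1 h3
      linarith [h4.2]
    calc (∫ φ in (0:ℝ)..(2*π), f a φ)
        ≤ ∫ _ in (0:ℝ)..(2*π), (1 + ε/(2*π+1)) :=
          intervalIntegral.integral_mono_on h2π.le ((hcontf ha0).intervalIntegrable _ _)
            intervalIntegrable_const hpt
      _ = 2*π*(1 + ε/(2*π+1)) := by
          simp [intervalIntegral.integral_const]
          ring
      _ ≤ 2*π + ε := by
          have h9 : 2*π*(ε/(2*π+1)) ≤ ε := by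
            rw [mul_div_assoc']
            rw [div_le_iff₀ (by positivity : (0:ℝ) < 2*π+1)]
            nlinarith
          nlinarith [h9]
  -- ## Global upper bound for the average
  have hWub : ∀ {b : ℝ}, 0 < b → (∫ φ in (0:ℝ)..(2*π), f b φ) ≤ 2*π*(1+b^2) := by
    intro b hb
    refine le_of_forall_pos_le_add ?_
    intro ε hε
    obtain ⟨a, ha0, hab, haW⟩ := hWsmall ε hε b hb
    have h1 := hmono a b ha0 hab
    nlinarith [sq_nonneg a]
  -- ## Asymptotic lower bound for the average
  have hμint : IntervalIntegrable μ volume 0 (2*π) := hμc.intervalIntegrable _ _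
  have hWlow : ∀ ε : ℝ, 0 < ε → ∃ R : ℝ, 1 ≤ R ∧ ∀ r : ℝ, R ≤ r →
      2*π*r^2 - (∫ φ in (0:ℝ)..(2*π), μ φ) - 2*π*ε ≤ ∫ φ in (0:ℝ)..(2*π), f r φ := by
    intro ε hε
    obtain ⟨R₀, hR₀⟩ := hasym ε hε
    refine ⟨max R₀ 1, le_max_right _ _, ?_⟩
    intro r hr
    have hr1 : (1:ℝ) ≤ r := le_trans (le_max_right _ _) hr
    have hr0 : (0:ℝ) < r := lt_of_lt_of_le one_pos hr1
    have hpt : ∀ φ ∈ Set.Icc (0:ℝ) (2*π), r^2 - μ φ - ε ≤ f r φ := by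
      intro φ _
      have h5 := hR₀ r (le_trans (le_max_left _ _) hr) φ
      have h6 := abs_lt.1 h5
      linarith [h6.1]
    have h1 : (∫ φ in (0:ℝ)..(2*π), (r^2 - μ φ - ε)) ≤ ∫ φ in (0:ℝ)..(2*π), f r φ :=
      intervalIntegral.integral_mono_on h2π.le
        ((intervalIntegrable_const.sub hμint).sub intervalIntegrable_const)
        ((hcontf hr0).intervalIntegrable _ _) hpt
    have h2 : (∫ φ in (0:ℝ)..(2*π), (r^2 - μ φ - ε)) =
        2*π*r^2 - (∫ φ in (0:ℝ)..(2*π), μ φ) - 2*π*ε := by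
      rw [intervalIntegral.integral_sub (intervalIntegrable_const.sub hμint)
        intervalIntegrable_const,
        intervalIntegral.integral_sub intervalIntegrable_const hμint]
      simp [intervalIntegral.integral_const]
    linarith
  have hIμ : -(2*π) ≤ ∫ φ in (0:ℝ)..(2*π), μ φ := by
    refine le_of_forall_pos_le_add ?_
    intro ε hε
    have hε' : 0 < ε/(2*π) := by positivity
    obtain ⟨R, hR1, hRlow⟩ := hWlow (ε/(2*π)) hε'
    have hR0 : (0:ℝ) < R := lt_of_lt_of_le one_pos hR1
    have h1 := hRlow R (le_refl R)
    have h2 := hWub hR0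
    have h3 : 2*π*(ε/(2*π)) = ε := by field_simp
    linarith
  have hgoal1 : -1 ≤ (1 / (2*π)) * ∫ φ in (0:ℝ)..(2*π), μ φ := by
    have h1 : (1/(2*π)) * (-(2*π)) ≤ (1/(2*π)) * ∫ φ in (0:ℝ)..(2*π), μ φ :=
      mul_le_mul_of_nonneg_left hIμ (by positivity)
    have h2 : (1/(2*π)) * (-(2*π)) = -1 := by field_simp
    linarith
  refine ⟨hgoal1, ?_, ?_⟩
  · -- ## Rigidity: equality forces f = r² + 1
    intro hH
    have hIμeq : (∫ φ in (0:ℝ)..(2*π), μ φ) = -(2*π) := by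
      have h1 : (2*π) * ((1/(2*π)) * ∫ φ in (0:ℝ)..(2*π), μ φ) = (2*π) * (-1) := by
        rw [hH]
      rw [← mul_assoc, mul_one_div, div_self h2π.ne', one_mul] at h1
      linarith
    have hΦ0 : ∀ r : ℝ, 0 < r → (∫ φ in (0:ℝ)..(2*π), f r φ) = 2*π*(1+r^2) := by
      intro r hr
      refine le_antisymm (hWub hr) ?_
      refine le_of_forall_pos_le_add ?_
      intro ε hε
      have hε' : 0 < ε/(2*π) := by positivity
      obtain ⟨R, hR1, hRlow⟩ := hWlow (ε/(2*π)) hε'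
      have hrr' : r ≤ max r R := le_max_left _ _
      have hr'0 : 0 < max r R := lt_of_lt_of_le hr hrr'
      have h1 := hmono r (max r R) hr hrr'
      have h2 := hRlow (max r R) (le_max_right _ _)
      have h3 := hWub hr'0
      have h4 : 2*π*(ε/(2*π)) = ε := by field_simp
      rw [hIμeq] at h2
      linarith
    have hWD_eq : ∀ r : ℝ, 0 < r →
        (∫ φ in (0:ℝ)..(2*π), pderivR f r φ) = 4*π*r := by
      intro r hr
      have hP : HasDerivAt (fun s : ℝ => 2*π*(1+s^2)) (4*π*r) r := by
        have h2 : HasDerivAt (fun s : ℝ => s^2) (2*r) r := by simpa using hasDerivAt_pow 2 r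
        have h3 := (h2.const_add (1:ℝ)).const_mul (2*π)
        refine h3.congr_deriv ?_
        ring
      have hWeq : (fun s => ∫ φ in (0:ℝ)..(2*π), f s φ) =ᶠ[𝓝 r]
          (fun s => 2*π*(1+s^2)) := by
        filter_upwards [Ioi_mem_nhds hr] with s hs
        exact hΦ0 s hs
      have h5 : HasDerivAt (fun s => ∫ φ in (0:ℝ)..(2*π), f s φ) (4*π*r) r :=
        hP.congr_of_eventuallyEq hWeq
      exact (hWd hr).unique h5
    have hIQ0 : ∀ r : ℝ, 0 < r →
        (∫ φ in (0:ℝ)..(2*π), (pderivPhi f r φ / f r φ)^2) = 0 := by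
      intro r hr
      have h1 := hkey hr
      rw [hWD_eq r hr] at h1
      have h2 := hIRlb hr
      have h3 := hIQnn (r := r) hr
      have h4 : (0:ℝ) < 1/(2*r) := by positivity
      have h5 : (1/(2*r)) * (∫ φ in (0:ℝ)..(2*π), (pderivPhi f r φ / f r φ)^2) ≤ 0 := by
        nlinarith [mul_le_mul_of_nonneg_left h2 hr.le]
      have h6 : (∫ φ in (0:ℝ)..(2*π), (pderivPhi f r φ / f r φ)^2) ≤ 0 := by
        by_contra h7
        push_neg at h7
        nlinarith [mul_pos h4 h7]
      exact le_antisymm h6 h3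
    have hIReq : ∀ r : ℝ, 0 < r →
        (∫ φ in (0:ℝ)..(2*π), scalarCurv f r φ) = -(4*π) := by
      intro r hr
      have h1 := hkey hr
      rw [hWD_eq r hr, hIQ0 r hr] at h1
      have hrne : r ≠ 0 := hr.ne'
      have h8 : -r * (∫ φ in (0:ℝ)..(2*π), scalarCurv f r φ) = 4*π*r := by linarith
      have h9 : r * ((∫ φ in (0:ℝ)..(2*π), scalarCurv f r φ) + 4*π) = 0 := by
        nlinarith [h8]
      rcases mul_eq_zero.1 h9 with h10 | h10
      · exact absurd h10 hrne
      · linarith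
    have hpφ0 : ∀ r : ℝ, 0 < r → ∀ φ : ℝ, pderivPhi f r φ = 0 := by
      intro r hr
      have hz := aux_eq_zero_of_integral_zero (hqcont hr) (fun x => sq_nonneg _)
        (hIQ0 r hr)
      have hzIcc : ∀ φ ∈ Set.Icc (0:ℝ) (2*π), pderivPhi f r φ = 0 := by
        intro φ hφ
        have h1 := hz φ hφ
        have h2 : pderivPhi f r φ / f r φ = 0 := by
          have := sq_eq_zero_iff.1 h1
          exact this
        rcases div_eq_zero_iff.1 h2 with h3 | h3
        · exact h3
        · exact absurd h3 (hfne hr.le φ)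
      intro φ
      obtain ⟨y, hy, hyeq⟩ := (hperφ hr).exists_mem_Ico₀ h2π φ
      have h3 : pderivPhi f r φ = pderivPhi f r y := hyeq
      rw [h3]
      exact hzIcc y (Set.Ico_subset_Icc_self hy)
    have hpφφ0 : ∀ r : ℝ, 0 < r → ∀ φ : ℝ, pderivPhi2 f r φ = 0 := by
      intro r hr φ
      have hfun : (deriv fun t => f r t) = fun _ => (0:ℝ) :=
        funext (fun t => hpφ0 r hr t)
      show deriv (deriv fun t => f r t) φ = 0
      rw [hfun]
      simp
    have hpR : ∀ r : ℝ, 0 < r → ∀ φ : ℝ, pderivR f r φ = 2*r := by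
      intro r hr
      have hrne : r ≠ 0 := hr.ne'
      have hsc : ∀ φ, scalarCurv f r φ = -(1/r) * pderivR f r φ := by
        intro φ
        simp only [scalarCurv, hpφ0 r hr φ, hpφφ0 r hr φ]
        ring
      have hcont2 : Continuous (fun φ => scalarCurv f r φ + 2) :=
        (hRcont hr).add continuous_const
      have hintz : (∫ φ in (0:ℝ)..(2*π), (scalarCurv f r φ + 2)) = 0 := by
        rw [intervalIntegral.integral_add ((hRcont hr).intervalIntegrable _ _)
          intervalIntegrable_const, hIReq r hr]
        simp [intervalIntegral.integral_const]
        ring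
      have hz := aux_eq_zero_of_integral_zero hcont2
        (fun x => by linarith [hR r hr x]) hintz
      intro φ
      obtain ⟨y, hy, hyeq⟩ := (hperR hr).exists_mem_Ico₀ h2π φ
      have h3 : pderivR f r φ = pderivR f r y := hyeq
      rw [h3]
      have h4 := hz y (Set.Ico_subset_Icc_self hy)
      rw [hsc y] at h4
      field_simp at h4
      linarith
    intro r hr0 φ
    rcases eq_or_lt_of_le hr0 with hr | hr
    · rw [← hr, hcenter φ]
      norm_num
    · have hcψ : ContinuousOn (fun s => f s φ - s^2) (Set.Icc 0 r) := by
        have hc1 : ContinuousOn (fun s => f s φ) (Set.Icc 0 r) := by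
          have hmap : ∀ s ∈ Set.Icc (0:ℝ) r,
              ((s, φ) : ℝ×ℝ) ∈ Set.Ici (0:ℝ) ×ˢ (Set.univ : Set ℝ) :=
            fun s hs => ⟨hs.1, trivial⟩
          exact hf.continuousOn.comp
            ((continuous_id.prodMk continuous_const).continuousOn) hmap
        exact hc1.sub ((continuous_pow 2).continuousOn)
      have hdψ : ∀ s ∈ Set.Ioo (0:ℝ) r, HasDerivAt (fun s => f s φ - s^2) 0 s := by
        intro s hs
        have h1 := (hasRp (r := s) (φ := φ) hs.1).sub (hasDerivAt_pow 2 s)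
        refine h1.congr_deriv ?_
        rw [hpR s hs.1 φ]
        push_cast
        ring
      obtain ⟨c, hc, hceq⟩ := exists_hasDerivAt_eq_slope (fun s => f s φ - s^2)
        (fun _ => (0:ℝ)) hr hcψ hdψ
      have h3 : (0:ℝ) = (f r φ - r^2 - (f 0 φ - 0^2))/(r - 0) := hceq
      rw [eq_div_iff (by linarith : r - (0:ℝ) ≠ 0)] at h3
      rw [hcenter φ] at h3
      nlinarith [h3]
  · -- ## Converse: hyperbolic space has mass exactly -1
    intro hflat
    have hμ1 : ∀ φ : ℝ, μ φ = -1 := by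
      intro φ
      have habs : ∀ ε : ℝ, 0 < ε → |1 + μ φ| < ε := by
        intro ε hε
        obtain ⟨R, hRp⟩ := hasym ε hε
        have h1 := hRp (max R 0) (le_max_left _ _) φ
        rw [hflat (max R 0) (le_max_right _ _) φ] at h1
        have h2 : (max R 0)^2 + 1 - (max R 0)^2 + μ φ = 1 + μ φ := by ring
        rwa [h2] at h1
      have h3 : |1 + μ φ| ≤ 0 := by
        by_contra h
        push_neg at h
        exact lt_irrefl _ (habs _ h)
      have h4 := abs_eq_zero.1 (le_antisymm h3 (abs_nonneg _))
      linarith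
    have h5 : (∫ φ in (0:ℝ)..(2*π), μ φ) = -(2*π) := by
      rw [intervalIntegral.integral_congr (g := fun _ => (-1:ℝ)) (fun x _ => hμ1 x)]
      simp
    rw [h5]
    field_simp
end

section
/- (Mass of the Maskit gluing of two positive-mass Birmingham–Kottler solutions.) Let m̌ > 0, m̂ > 0 and ω̌ > 1, ω̂ > 1 be real numbers. Define the real 2×2 matrices M̌ = [[e^{−π√m̌}, 2ω̌·cosh(π√m̌)],[0, e^{π√m̌}]] and M̂ = [[e^{π√m̂}, 0],[−2ω̂·cosh(π√m̂), e^{−π√m̂}]]. Then M := −M̌·M̂ satisfies det M = 1 and (1/2)·tr M = 2·ω̌·ω̂·cosh(π√m̌)·cosh(π√m̂) − cosh(π√m̌ − π√m̂) > 1, so that M is hyperbolic; consequently there exists a unique real number m_c > 0 with cosh(π√m_c) = 2·ω̌·ω̂·cosh(π√m̌)·cosh(π√m̂) − cosh(π(√m̌ − √m̂)). -/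
open Real Matrix

/-- Mass of the Maskit gluing of two positive-mass Birmingham–Kottler
solutions: with `m̌, m̂ > 0` and gluing parameters `ω̌, ω̂ > 1`, the glued
monodromy matrix `M = −M̌·M̂` has determinant `1` and half-trace
`2 ω̌ ω̂ cosh(π√m̌) cosh(π√m̂) − cosh(π√m̌ − π√m̂) > 1`, hence is hyperbolic,
and there is a unique mass `m_c > 0` with `cosh(π√m_c) = (1/2) tr M`. -/
theorem maskit_gluing_positive_masses (mc mh oc oh : ℝ)
    (hmc : 0 < mc) (hmh : 0 < mh) (hoc : 1 < oc) (hoh : 1 < oh)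
    (Mc Mh : Matrix (Fin 2) (Fin 2) ℝ)
    (hMc : Mc = !![Real.exp (-(π * Real.sqrt mc)),
        2 * oc * Real.cosh (π * Real.sqrt mc); 0, Real.exp (π * Real.sqrt mc)])
    (hMh : Mh = !![Real.exp (π * Real.sqrt mh), 0;
        -(2 * oh * Real.cosh (π * Real.sqrt mh)),
        Real.exp (-(π * Real.sqrt mh))]) :
    (-(Mc * Mh)).det = 1 ∧
      (1 / 2) * (-(Mc * Mh)).trace =
        2 * oc * oh * Real.cosh (π * Real.sqrt mc) * Real.cosh (π * Real.sqrt mh) -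
          Real.cosh (π * Real.sqrt mc - π * Real.sqrt mh) ∧
      1 < (1 / 2) * (-(Mc * Mh)).trace ∧
      ∃! x : ℝ, 0 < x ∧
        Real.cosh (π * Real.sqrt x) =
          2 * oc * oh * Real.cosh (π * Real.sqrt mc) * Real.cosh (π * Real.sqrt mh) -
            Real.cosh (π * (Real.sqrt mc - Real.sqrt mh)) := by
  subst hMc hMh
  set a := π * Real.sqrt mc with ha
  set b := π * Real.sqrt mh with hb
  set T : ℝ := 2 * oc * oh * Real.cosh a * Real.cosh b - Real.cosh (a - b) with hT
  have hdet : (-(!![Real.exp (-a), 2 * oc * Real.cosh a; 0, Real.exp a] *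
      !![Real.exp b, 0; -(2 * oh * Real.cosh b), Real.exp (-b)])).det = 1 := by
    rw [Matrix.det_neg, Matrix.det_mul]
    simp [Matrix.det_fin_two_of, ← Real.exp_add]
  have htr : (1 / 2 : ℝ) * (-(!![Real.exp (-a), 2 * oc * Real.cosh a; 0, Real.exp a] *
      !![Real.exp b, 0; -(2 * oh * Real.cosh b), Real.exp (-b)])).trace = T := by
    simp only [Matrix.mul_fin_two, Matrix.trace_fin_two_of, Matrix.neg_apply,
      Matrix.trace_neg, Matrix.trace_fin_two, Matrix.of_apply, Matrix.cons_val',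
      Matrix.cons_val_zero, Matrix.cons_val_one, Matrix.head_cons, Matrix.head_fin_const,
      Matrix.empty_val', Matrix.cons_val_fin_one]
    rw [hT]
    simp only [Real.cosh_eq, sub_eq_add_neg, neg_add_rev, neg_neg, Real.exp_add, Real.exp_neg]
    have h1 := Real.exp_pos a
    have h2 := Real.exp_pos b
    field_simp
    ring
  have hcoshab : 2 * Real.cosh a * Real.cosh b = Real.cosh (a + b) + Real.cosh (a - b) := by
    rw [Real.cosh_add, Real.cosh_sub]; ring
  have hT1 : 1 < T := by
    have h1 : (1 : ℝ) ≤ Real.cosh a := Real.one_le_cosh a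
    have h2 : (1 : ℝ) ≤ Real.cosh b := Real.one_le_cosh b
    have h3 : (1 : ℝ) ≤ Real.cosh (a + b) := Real.one_le_cosh _
    have hC : 1 ≤ Real.cosh a * Real.cosh b := one_le_mul_of_one_le_of_one_le h1 h2
    have h4 : 1 < oc * oh := by nlinarith [mul_pos (sub_pos.2 hoc) (sub_pos.2 hoh)]
    have hp : 0 < (oc * oh - 1) * (Real.cosh a * Real.cosh b) :=
      mul_pos (by linarith) (by linarith)
    nlinarith [hcoshab, h3]
  refine ⟨hdet, htr, htr ▸ hT1, ?_⟩
  have hTmem : T ∈ Set.Icc (Real.cosh 0) (Real.cosh T) := by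
    constructor
    · rw [Real.cosh_zero]; exact hT1.le
    · have := Real.quadratic_le_exp_of_nonneg (le_of_lt (lt_trans one_pos hT1))
      have h2 := Real.exp_pos (-T)
      rw [Real.cosh_eq]
      nlinarith
  obtain ⟨y, hy, hcy⟩ := intermediate_value_Icc (by nlinarith [Real.one_le_cosh T,
      Real.cosh_zero] : (0:ℝ) ≤ T) (Real.continuous_cosh.continuousOn) hTmem
  have hy0 : 0 < y := by
    rcases lt_or_eq_of_le hy.1 with h | h
    · exact h
    · exfalso; rw [← h, Real.cosh_zero] at hcy; linarith
  have hTeq : 2 * oc * oh * Real.cosh a * Real.cosh b -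
      Real.cosh (π * (Real.sqrt mc - Real.sqrt mh)) = T := by
    rw [hT, ha, hb, mul_sub]
  rw [hTeq]
  have hπ : (0 : ℝ) < π := Real.pi_pos
  refine ⟨(y / π) ^ 2, ⟨by positivity, ?_⟩, ?_⟩
  · rw [Real.sqrt_sq (by positivity), mul_div_cancel₀ _ (ne_of_gt hπ), hcy]
  · rintro z ⟨hz0, hz⟩
    have hsqz : 0 ≤ π * Real.sqrt z := by positivity
    have hsz : π * Real.sqrt z = y := by
      have h1 : Real.cosh (π * Real.sqrt z) = Real.cosh y := by rw [hz, hcy]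
      have h2 : |π * Real.sqrt z| = |y| :=
        le_antisymm (Real.cosh_le_cosh.1 h1.le) (Real.cosh_le_cosh.1 h1.ge)
      rwa [abs_of_nonneg hsqz, abs_of_nonneg hy0.le] at h2
    have : Real.sqrt z = y / π := by
      field_simp at hsz ⊢
      linarith [hsz]
    rw [← this, Real.sq_sqrt hz0.le]
end
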